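/- arXiv:2005.11117 — 16 statements merged into one kernel-verified Lean document; each statement's English description precedes it below -/
import Mathlib

section
/- Let (L, α) be a multiplicative Hom-Lie algebra over F and (V, ρ, β) an (L, α)-module. For every natural number k, the triple (V, ρ_k, β) with ρ_k(x) := ρ(α^k(x)) is again an (L, α)-module, i.e. β∘ρ_k(x) = ρ_k(α(x))∘β and ρ_k([x,y])∘β = ρ_k(α(x))∘ρ_k(y) − ρ_k(α(y))∘ρ_k(x) for all x, y ∈ L. -/
/-- If `(V, ρ, β)` is an `(L, α)`-module, then `(V, ρₖ, β)` with
`ρₖ x = ρ (α^k x)` is again an `(L, α)`-module. -/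
theorem homLie_module_pow_twist
    {F L V : Type*} [Field F] [AddCommGroup L] [Module F L]
    [AddCommGroup V] [Module F V]
    (hchar : (2 : F) ≠ 0)
    (bracket : L →ₗ[F] L →ₗ[F] L) (α : L →ₗ[F] L)
    (hskew : ∀ x y : L, bracket x y = - bracket y x)
    (hjac : ∀ x y z : L,
      bracket (α x) (bracket y z) + bracket (α y) (bracket z x)
        + bracket (α z) (bracket x y) = 0)
    (hmult : ∀ x y : L, α (bracket x y) = bracket (α x) (α y))
    (ρ : L →ₗ[F] V →ₗ[F] V) (β : V →ₗ[F] V)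
    (hrep1 : ∀ (x : L) (v : V), β (ρ x v) = ρ (α x) (β v))
    (hrep2 : ∀ (x y : L) (v : V),
      ρ (bracket x y) (β v) = ρ (α x) (ρ y v) - ρ (α y) (ρ x v))
    (k : ℕ) :
    (∀ (x : L) (v : V), β (ρ ((α ^ k) x) v) = ρ ((α ^ k) (α x)) (β v)) ∧
    (∀ (x y : L) (v : V),
      ρ ((α ^ k) (bracket x y)) (β v)
        = ρ ((α ^ k) (α x)) (ρ ((α ^ k) y) v)
          - ρ ((α ^ k) (α y)) (ρ ((α ^ k) x) v)) := by
  have hcomm : ∀ x : L, α ((α ^ k) x) = (α ^ k) (α x) := by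
    intro x
    have := congrFun (congrArg DFunLike.coe (pow_succ' α k).symm) x
    simpa [Module.End.pow_apply, Function.iterate_succ_apply,
      Function.iterate_succ_apply'] using
      (congrFun (congrArg DFunLike.coe (pow_mul_comm' α k)) x).symm
  have hmultk : ∀ x y : L, (α ^ k) (bracket x y) = bracket ((α ^ k) x) ((α ^ k) y) := by
    clear hcomm
    induction k with
    | zero => intro x y; simp
    | succ n ih =>
      intro x y
      simp only [pow_succ, Module.End.mul_apply, hmult, ih]
  refine ⟨fun x v => ?_, fun x y v => ?_⟩
  · rw [hrep1, hcomm]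
  · rw [hmultk, hrep2, hcomm, hcomm]
end

section
/- Let (L, α) be a multiplicative Hom-Lie algebra over F and (V, ρ, β) an (L, α)-module. If S is an ideal of L (i.e. a subspace with [S, L] ⊆ S and α(S) ⊆ S) such that α(S) = S, then Z_V(S) = {v ∈ V : ρ(s)(v) = 0 for all s ∈ S} is a submodule of (V, ρ, β), i.e. β(Z_V(S)) ⊆ Z_V(S) and ρ(x)(Z_V(S)) ⊆ Z_V(S) for all x ∈ L. -/
/-- If `S` is an ideal of `L` with `α(S) = S`, then
`Z_V(S)` is a submodule of `(V, ρ, β)`. -/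
theorem homLie_annihilator_of_ideal_is_submodule
    {F L V : Type*} [Field F] [AddCommGroup L] [Module F L]
    [AddCommGroup V] [Module F V]
    (hchar : (2 : F) ≠ 0)
    (bracket : L →ₗ[F] L →ₗ[F] L) (α : L →ₗ[F] L)
    (hskew : ∀ x y : L, bracket x y = - bracket y x)
    (hjac : ∀ x y z : L,
      bracket (α x) (bracket y z) + bracket (α y) (bracket z x)
        + bracket (α z) (bracket x y) = 0)
    (hmult : ∀ x y : L, α (bracket x y) = bracket (α x) (α y))
    (ρ : L →ₗ[F] V →ₗ[F] V) (β : V →ₗ[F] V)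
    (hrep1 : ∀ (x : L) (v : V), β (ρ x v) = ρ (α x) (β v))
    (hrep2 : ∀ (x y : L) (v : V),
      ρ (bracket x y) (β v) = ρ (α x) (ρ y v) - ρ (α y) (ρ x v))
    (S : Submodule F L)
    (hSideal : ∀ s ∈ S, ∀ y : L, bracket s y ∈ S)
    (hSα : Submodule.map α S = S) :
    (∀ v : V, (∀ s ∈ S, ρ s v = 0) → ∀ s ∈ S, ρ s (β v) = 0) ∧
    (∀ v : V, (∀ s ∈ S, ρ s v = 0) → ∀ (x : L), ∀ s ∈ S, ρ s (ρ x v) = 0) := by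
  have key : ∀ v : V, (∀ s ∈ S, ρ s v = 0) → ∀ s ∈ S, ρ s (β v) = 0 := by
    intro v hv s hs
    rw [← hSα] at hs
    obtain ⟨t, ht, rfl⟩ := hs
    rw [← hrep1, hv t ht, map_zero]
  refine ⟨key, ?_⟩
  intro v hv x s hs
  rw [← hSα] at hs
  obtain ⟨t, ht, rfl⟩ := hs
  have h2 := hrep2 t x v
  have h3 : ρ (bracket t x) (β v) = 0 := key v hv _ (hSideal t ht x)
  rw [h3] at h2
  rw [hv t ht, map_zero, sub_zero] at h2
  exact h2.symm
end

section
/- Let (L, α) be a multiplicative Hom-Lie algebra over F with α surjective, and let (V, ρ, β) be an (L, α)-module. If f : L → V is a commuting linear map (i.e. ρ(α(x))(f(x)) = 0 for all x ∈ L and β∘f = f∘α) such that f(z) ∈ Z_V(L') for all z ∈ L, then f(w) ∈ Z_V(L) for all w ∈ L', i.e. ρ(x)(f(w)) = 0 for all x ∈ L and all w in the span of brackets. -/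
/-- If `f` is a commuting linear map with `f(L) ⊆ Z_V(L')` and `α`
is surjective, then `f(L') ⊆ Z_V(L)`. -/
theorem homLie_commuting_special_maps_derived_to_center
    {F L V : Type*} [Field F] [AddCommGroup L] [Module F L]
    [AddCommGroup V] [Module F V]
    (hchar : (2 : F) ≠ 0)
    (bracket : L →ₗ[F] L →ₗ[F] L) (α : L →ₗ[F] L)
    (hskew : ∀ x y : L, bracket x y = - bracket y x)
    (hjac : ∀ x y z : L,
      bracket (α x) (bracket y z) + bracket (α y) (bracket z x)
        + bracket (α z) (bracket x y) = 0)
    (hmult : ∀ x y : L, α (bracket x y) = bracket (α x) (α y))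
    (hαsurj : Function.Surjective α)
    (ρ : L →ₗ[F] V →ₗ[F] V) (β : V →ₗ[F] V)
    (hrep1 : ∀ (x : L) (v : V), β (ρ x v) = ρ (α x) (β v))
    (hrep2 : ∀ (x y : L) (v : V),
      ρ (bracket x y) (β v) = ρ (α x) (ρ y v) - ρ (α y) (ρ x v))
    (f : L →ₗ[F] V)
    (hcom : ∀ x : L, ρ (α x) (f x) = 0)
    (hfα : ∀ x : L, β (f x) = f (α x))
    (hrange : ∀ z : L, ∀ s ∈ Submodule.span F {w : L | ∃ x y : L, bracket x y = w},
      ρ s (f z) = 0) :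
    ∀ w ∈ Submodule.span F {w : L | ∃ x y : L, bracket x y = w},
      ∀ x : L, ρ x (f w) = 0 := by
  -- Polarization of the commuting condition
  have hpol : ∀ x y : L, ρ (α x) (f y) + ρ (α y) (f x) = 0 := by
    intro x y
    have h := hcom (x + y)
    simp only [map_add, LinearMap.add_apply] at h
    rw [hcom x, hcom y] at h
    simpa [add_comm] using h
  intro w hw x
  induction hw using Submodule.span_induction with
  | mem w hw =>
    obtain ⟨a, b, rfl⟩ := hw
    obtain ⟨x', rfl⟩ := hαsurj x
    have h := hpol x' (bracket a b)
    have h2 : ρ (α (bracket a b)) (f x') = 0 := by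
      rw [hmult]
      exact hrange x' _ (Submodule.subset_span ⟨α a, α b, rfl⟩)
    rw [h2, add_zero] at h
    exact h
  | zero => simp
  | add u v _ _ hu hv => simp [map_add, hu, hv]
  | smul c u _ hu => simp [map_smul, hu]
end

section
/- (Schur's lemma for adjoint Hom-Lie modules.) Let F be an algebraically closed field with char F ≠ 2, and let (L, α) be a finite-dimensional simple multiplicative Hom-Lie algebra over F with α bijective. Let k, s be natural numbers and let f : L → L be a linear map satisfying f∘α = α∘f and f([α^k(x), y]) = [α^{k+s+1}(x), f(y)] for all x, y ∈ L (i.e. f is an (L, α)-module homomorphism from (L, ad_k, α) to (L, ad_{k+s}, α)). Then there exists λ ∈ F such that f = λ·α^{s+1}. -/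
/-- Schur's lemma for adjoint Hom-Lie modules: a module
homomorphism `f : (L, ad_k, α) → (L, ad_{k+s}, α)` over a finite-dimensional
simple Hom-Lie algebra with `α` bijective, over an algebraically closed field,
is a scalar multiple of `α^{s+1}`. -/
theorem homLie_schur_adjoint
    {F L : Type*} [Field F] [IsAlgClosed F] [AddCommGroup L] [Module F L]
    [FiniteDimensional F L]
    (hchar : (2 : F) ≠ 0)
    (bracket : L →ₗ[F] L →ₗ[F] L) (α : L ≃ₗ[F] L)
    (hskew : ∀ x y : L, bracket x y = - bracket y x)
    (hjac : ∀ x y z : L,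
      bracket (α x) (bracket y z) + bracket (α y) (bracket z x)
        + bracket (α z) (bracket x y) = 0)
    (hmult : ∀ x y : L, α (bracket x y) = bracket (α x) (α y))
    (hsimple : ∀ I : Submodule F L,
      (∀ x ∈ I, ∀ y : L, bracket x y ∈ I) → (∀ x ∈ I, α x ∈ I) →
      I = ⊥ ∨ I = ⊤)
    (hnonabelian : ∃ x y : L, bracket x y ≠ 0)
    (k s : ℕ) (f : L →ₗ[F] L)
    (hfα : ∀ x : L, f (α x) = α (f x))
    (hf : ∀ x y : L,
      f (bracket ((α ^ k) x) y) = bracket ((α ^ (k + s + 1)) x) (f y)) :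
    ∃ lam : F, ∀ x : L, f x = lam • (α ^ (s + 1)) x := by
  -- multiplicativity for powers of α
  have hpow : ∀ (n : ℕ) (x y : L),
      (α ^ n) (bracket x y) = bracket ((α ^ n) x) ((α ^ n) y) := by
    intro n
    induction n with
    | zero => intro x y; simp
    | succ m ih =>
      intro x y
      have h1 : ∀ z : L, (α ^ (m + 1)) z = (α ^ m) (α z) := by
        intro z
        rw [pow_succ]
        rfl
      rw [h1, h1, h1, hmult, ih]
  -- multiplicativity for inverse powers
  have hpowsymm : ∀ (n : ℕ) (x y : L),
      (α ^ n).symm (bracket x y) = bracket ((α ^ n).symm x) ((α ^ n).symm y) := by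
    intro n x y
    apply (α ^ n).injective
    rw [hpow n, (α ^ n).apply_symm_apply, (α ^ n).apply_symm_apply,
      (α ^ n).apply_symm_apply]
  -- the auxiliary endomorphism g = α^{-(s+1)} ∘ f
  set g : L →ₗ[F] L := ((α ^ (s + 1)).symm : L ≃ₗ[F] L).toLinearMap ∘ₗ f with hg
  have hgdef : ∀ x : L, g x = (α ^ (s + 1)).symm (f x) := fun x => rfl
  -- g commutes with α
  have hgα : ∀ x : L, g (α x) = α (g x) := by
    intro x
    rw [hgdef, hgdef, hfα]
    apply (α ^ (s + 1)).injective
    rw [(α ^ (s + 1)).apply_symm_apply]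
    have hc : ∀ z : L, (α ^ (s + 1)) (α z) = α ((α ^ (s + 1)) z) := by
      intro z
      have : (α ^ (s + 1)) * α = α * (α ^ (s + 1)) := by
        rw [← pow_succ, ← pow_succ']
      calc (α ^ (s + 1)) (α z) = ((α ^ (s + 1)) * α) z := rfl
        _ = (α * (α ^ (s + 1))) z := by rw [this]
        _ = α ((α ^ (s + 1)) z) := rfl
    rw [hc, (α ^ (s + 1)).apply_symm_apply]
  -- g commutes with ad in the first slot
  have hgbr : ∀ x y : L, g (bracket x y) = bracket x (g y) := by
    intro x y
    obtain ⟨z, hz⟩ := (α ^ k).surjective x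
    subst hz
    rw [hgdef, hgdef, hf, hpowsymm]
    have heq : (α ^ (s + 1)).symm ((α ^ (k + s + 1)) z) = (α ^ k) z := by
      apply (α ^ (s + 1)).injective
      rw [(α ^ (s + 1)).apply_symm_apply]
      have hmulid : (α ^ (s + 1)) * (α ^ k) = α ^ (k + s + 1) := by
        rw [← pow_add]; ring_nf
      calc (α ^ (k + s + 1)) z = ((α ^ (s + 1)) * (α ^ k)) z := by rw [hmulid]
        _ = (α ^ (s + 1)) ((α ^ k) z) := rfl
    rw [heq]
  -- L is nontrivial
  obtain ⟨a, b, hab⟩ := hnonabelian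
  have : Nontrivial L := nontrivial_of_ne (bracket a b) 0 hab
  -- eigenvalue of g
  obtain ⟨lam, hlam⟩ := Module.End.exists_eigenvalue (g : Module.End F L)
  obtain ⟨v, hv⟩ := hlam.exists_hasEigenvector
  have hvval : g v = lam • v := hv.apply_eq_smul
  have hvne : v ≠ 0 := hv.right
  -- the eigenspace as a submodule via kernel
  set I : Submodule F L := LinearMap.ker (g - lam • LinearMap.id) with hI
  have hmemI : ∀ x : L, x ∈ I ↔ g x = lam • x := by
    intro x
    simp [hI, LinearMap.mem_ker, sub_eq_zero]
  have h1 : ∀ x ∈ I, ∀ y : L, bracket x y ∈ I := by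
    intro x hx y
    rw [hmemI] at hx ⊢
    rw [hskew x y, map_neg, hgbr, hx]
    simp [hskew x y]
  have h2 : ∀ x ∈ I, α x ∈ I := by
    intro x hx
    rw [hmemI] at hx ⊢
    rw [hgα, hx, map_smul]
  rcases hsimple I h1 h2 with hbot | htop
  · exfalso
    apply hvne
    have : v ∈ I := (hmemI v).2 hvval
    rw [hbot] at this
    simpa using this
  · refine ⟨lam, fun x => ?_⟩
    have hx : x ∈ I := htop ▸ Submodule.mem_top
    rw [hmemI] at hx
    have : f x = (α ^ (s + 1)) (g x) := by
      rw [hgdef, (α ^ (s + 1)).apply_symm_apply]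
    rw [this, hx, map_smul]
end

section
/- Let (L, α) be a multiplicative Hom-Lie algebra over F and (V, ρ, β) an (L, α)-module with β invertible. If γ : L → V is a linear map in the centroid, i.e. γ([x,y]) = ρ(α(x))(γ(y)) for all x, y ∈ L and β∘γ = γ∘α, then the bilinear map δ(x, y) := β⁻¹(γ([x,y])) is a skew-symmetric biderivation from L × L to V, i.e. δ(x,y) = −δ(y,x), β(δ(x,y)) = δ(α(x),α(y)), and δ([x,y],α(z)) = ρ(α(x))(δ(y,z)) − ρ(α(y))(δ(x,z)) for all x, y, z ∈ L. -/
/-- If `γ` lies in the centroid `Cent(L, V)` and `β` is invertible,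
then `δ(x, y) = β⁻¹(γ([x, y]))` is a skew-symmetric biderivation. -/
theorem homLie_centroid_gives_biderivation
    {F L V : Type*} [Field F] [AddCommGroup L] [Module F L]
    [AddCommGroup V] [Module F V]
    (hchar : (2 : F) ≠ 0)
    (bracket : L →ₗ[F] L →ₗ[F] L) (α : L →ₗ[F] L)
    (hskew : ∀ x y : L, bracket x y = - bracket y x)
    (hjac : ∀ x y z : L,
      bracket (α x) (bracket y z) + bracket (α y) (bracket z x)
        + bracket (α z) (bracket x y) = 0)
    (hmult : ∀ x y : L, α (bracket x y) = bracket (α x) (α y))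
    (ρ : L →ₗ[F] V →ₗ[F] V) (β : V ≃ₗ[F] V)
    (hrep1 : ∀ (x : L) (v : V), β (ρ x v) = ρ (α x) (β v))
    (hrep2 : ∀ (x y : L) (v : V),
      ρ (bracket x y) (β v) = ρ (α x) (ρ y v) - ρ (α y) (ρ x v))
    (γ : L →ₗ[F] V)
    (hγ1 : ∀ x y : L, γ (bracket x y) = ρ (α x) (γ y))
    (hγ2 : ∀ x : L, β (γ x) = γ (α x))
    (δ : L → L → V)
    (hδ : ∀ x y : L, δ x y = β.symm (γ (bracket x y))) :
    (∀ x y : L, δ x y = - δ y x) ∧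
    (∀ x y : L, β (δ x y) = δ (α x) (α y)) ∧
    (∀ x y z : L,
      δ (bracket x y) (α z) = ρ (α x) (δ y z) - ρ (α y) (δ x z)) := by
  have hinv : ∀ (x : L) (v : V), β.symm (ρ (α x) v) = ρ x (β.symm v) := by
    intro x v
    have := hrep1 x (β.symm v)
    simp at this
    rw [← this]
    simp
  refine ⟨?_, ?_, ?_⟩
  · intro x y
    rw [hδ, hδ, hskew x y, map_neg, map_neg]
  · intro x y
    rw [hδ, hδ, ← hmult, ← hγ2]
    simp
  · intro x y z
    rw [hδ, hδ, hδ]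
    have key : γ (bracket (bracket x y) (α z)) = ρ (bracket (α x) (α y)) (β (γ z)) := by
      rw [hγ1, hmult, hγ2]
    rw [key, hrep2, map_sub, ← hγ1 y z, ← hγ1 x z, hinv, hinv]
end

section
/- Let (L, α) be a multiplicative Hom-Lie algebra over F, (V, ρ, β) an (L, α)-module, and δ : L × L → V a skew-symmetric biderivation. Then for all x, y, z, w ∈ L: β( ρ([x,y])(δ(z,w)) + ρ([z,w])(δ(x,y)) ) = 0. -/
/-- Lemma 3.2: for a skew-symmetric biderivation `δ`,
`β([x,y]δ(z,w) + [z,w]δ(x,y)) = 0`. -/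
theorem homLie_biderivation_lemma32
    {F L V : Type*} [Field F] [AddCommGroup L] [Module F L]
    [AddCommGroup V] [Module F V]
    (hchar : (2 : F) ≠ 0)
    (bracket : L →ₗ[F] L →ₗ[F] L) (α : L →ₗ[F] L)
    (hskew : ∀ x y : L, bracket x y = - bracket y x)
    (hjac : ∀ x y z : L,
      bracket (α x) (bracket y z) + bracket (α y) (bracket z x)
        + bracket (α z) (bracket x y) = 0)
    (hmult : ∀ x y : L, α (bracket x y) = bracket (α x) (α y))
    (ρ : L →ₗ[F] V →ₗ[F] V) (β : V →ₗ[F] V)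
    (hrep1 : ∀ (x : L) (v : V), β (ρ x v) = ρ (α x) (β v))
    (hrep2 : ∀ (x y : L) (v : V),
      ρ (bracket x y) (β v) = ρ (α x) (ρ y v) - ρ (α y) (ρ x v))
    (δ : L →ₗ[F] L →ₗ[F] V)
    (hδskew : ∀ x y : L, δ x y = - δ y x)
    (hδβ : ∀ x y : L, β (δ x y) = δ (α x) (α y))
    (hδbider : ∀ x y z : L,
      δ (bracket x y) (α z) = ρ (α x) (δ y z) - ρ (α y) (δ x z)) :
    ∀ x y z w : L,
      β (ρ (bracket x y) (δ z w) + ρ (bracket z w) (δ x y)) = 0 := by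
  -- Expansion of β (δ [a,b] [c,d])
  have expand : ∀ a b c d : L,
      β (δ (bracket a b) (bracket c d))
        = - ρ (α (α a)) (ρ (α c) (δ d b)) + ρ (α (α a)) (ρ (α d) (δ c b))
          + ρ (α (α b)) (ρ (α c) (δ d a)) - ρ (α (α b)) (ρ (α d) (δ c a)) := by
    intro a b c d
    rw [hδβ, hmult a b, hδbider (α a) (α b) (bracket c d),
        hδskew (α b) (bracket c d), hδskew (α a) (bracket c d),
        hδbider c d b, hδbider c d a]
    simp only [map_neg, map_sub]
    abel
  -- Key relation (∗)
  have star : ∀ a b c d : L,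
      ρ (α (bracket a c)) (δ (α d) (α b)) - ρ (α (bracket a d)) (δ (α c) (α b))
        - ρ (α (bracket b c)) (δ (α d) (α a))
        + ρ (α (bracket b d)) (δ (α c) (α a)) = 0 := by
    intro a b c d
    have hE := expand a b c d
    have hE' := expand c d a b
    rw [hδskew (bracket c d) (bracket a b), map_neg,
        hδskew b d, hδskew a d, hδskew b c, hδskew a c] at hE'
    simp only [map_neg] at hE'
    have hac : ρ (α (bracket a c)) (δ (α d) (α b))
        = ρ (α (α a)) (ρ (α c) (δ d b)) - ρ (α (α c)) (ρ (α a) (δ d b)) := by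
      rw [hmult a c, ← hδβ d b, hrep2]
    have had : ρ (α (bracket a d)) (δ (α c) (α b))
        = ρ (α (α a)) (ρ (α d) (δ c b)) - ρ (α (α d)) (ρ (α a) (δ c b)) := by
      rw [hmult a d, ← hδβ c b, hrep2]
    have hbc : ρ (α (bracket b c)) (δ (α d) (α a))
        = ρ (α (α b)) (ρ (α c) (δ d a)) - ρ (α (α c)) (ρ (α b) (δ d a)) := by
      rw [hmult b c, ← hδβ d a, hrep2]
    have hbd : ρ (α (bracket b d)) (δ (α c) (α a))
        = ρ (α (α b)) (ρ (α d) (δ c a)) - ρ (α (α d)) (ρ (α b) (δ c a)) := by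
      rw [hmult b d, ← hδβ c a, hrep2]
    rw [hac, had, hbc, hbd]
    linear_combination (norm := module) hE + hE'
  -- antisymmetry of G in the middle pair
  have hGanti : ∀ p q r s : L,
      (ρ (α (bracket p q)) (δ (α r) (α s)) + ρ (α (bracket r s)) (δ (α p) (α q)))
        + (ρ (α (bracket p s)) (δ (α q) (α r))
            + ρ (α (bracket q r)) (δ (α p) (α s))) = 0 := by
    intro p q r s
    have h := star p r q s
    rw [hδskew (α s) (α r), hδskew (α q) (α p), hskew r q,
        hδskew (α s) (α p)] at h
    simp only [map_neg, LinearMap.neg_apply] at h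
    linear_combination (norm := module) -h
  intro x y z w
  have h1 := hGanti x y z w
  have h2 := hGanti x w y z
  have h3 := hGanti x z w y
  have h0 : (2 : F) • (ρ (α (bracket x y)) (δ (α z) (α w))
      + ρ (α (bracket z w)) (δ (α x) (α y))) = 0 := by
    rw [two_smul]
    linear_combination (norm := module) h1 - h2 + h3
  have hg : ρ (α (bracket x y)) (δ (α z) (α w))
      + ρ (α (bracket z w)) (δ (α x) (α y)) = 0 :=
    (smul_eq_zero.mp h0).resolve_left hchar
  rw [map_add, hrep1, hrep1, hδβ, hδβ]
  exact hg
end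

section
/- Let (L, α) be a multiplicative Hom-Lie algebra over F, (V, ρ, β) an (L, α)-module, and δ : L × L → V a skew-symmetric biderivation. Then for all x, y, z ∈ L: δ([x,y],α(z)) + δ([y,z],α(x)) + δ([z,x],α(y)) = 2·( ρ(α(z))(δ(x,y)) − δ(α(z),[x,y]) ). -/
/-- Lemma 3.3: cyclic sum identity for a skew-symmetric biderivation:
`↺ δ([x,y],α(z)) = 2(α(z)δ(x,y) − δ(α(z),[x,y]))`. -/
theorem homLie_biderivation_lemma33
    {F L V : Type*} [Field F] [AddCommGroup L] [Module F L]
    [AddCommGroup V] [Module F V]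
    (hchar : (2 : F) ≠ 0)
    (bracket : L →ₗ[F] L →ₗ[F] L) (α : L →ₗ[F] L)
    (hskew : ∀ x y : L, bracket x y = - bracket y x)
    (hjac : ∀ x y z : L,
      bracket (α x) (bracket y z) + bracket (α y) (bracket z x)
        + bracket (α z) (bracket x y) = 0)
    (hmult : ∀ x y : L, α (bracket x y) = bracket (α x) (α y))
    (ρ : L →ₗ[F] V →ₗ[F] V) (β : V →ₗ[F] V)
    (hrep1 : ∀ (x : L) (v : V), β (ρ x v) = ρ (α x) (β v))
    (hrep2 : ∀ (x y : L) (v : V),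
      ρ (bracket x y) (β v) = ρ (α x) (ρ y v) - ρ (α y) (ρ x v))
    (δ : L →ₗ[F] L →ₗ[F] V)
    (hδskew : ∀ x y : L, δ x y = - δ y x)
    (hδβ : ∀ x y : L, β (δ x y) = δ (α x) (α y))
    (hδbider : ∀ x y z : L,
      δ (bracket x y) (α z) = ρ (α x) (δ y z) - ρ (α y) (δ x z)) :
    ∀ x y z : L,
      δ (bracket x y) (α z) + δ (bracket y z) (α x) + δ (bracket z x) (α y)
        = (2 : F) • (ρ (α z) (δ x y) - δ (α z) (bracket x y)) := by
  intro x y z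
  rw [hδskew (α z) (bracket x y), hδbider x y z, hδbider y z x, hδbider z x y,
      hδskew x z, hδskew y x, hδskew z y]
  simp only [map_neg, neg_neg, two_smul]
  abel
end

section
/- Let (L, α) be a multiplicative Hom-Lie algebra over F, (V, ρ, β) an (L, α)-module with β invertible, and δ : L × L → V a skew-symmetric biderivation. Then for all x, y, u, z, w ∈ L: ρ([z,w])( δ(α(u),[x,y]) − ρ(α(u))(δ(x,y)) ) = 0; in other words δ(α(u),[x,y]) − ρ(α(u))(δ(x,y)) lies in Z_V(L'). -/
/-- Lemma 3.4: if `β` is invertible, then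
`δ(α(u),[x,y]) − α(u)δ(x,y) ∈ Z_V(L')` for a skew-symmetric biderivation `δ`. -/
theorem homLie_biderivation_lemma34
    {F L V : Type*} [Field F] [AddCommGroup L] [Module F L]
    [AddCommGroup V] [Module F V]
    (hchar : (2 : F) ≠ 0)
    (bracket : L →ₗ[F] L →ₗ[F] L) (α : L →ₗ[F] L)
    (hskew : ∀ x y : L, bracket x y = - bracket y x)
    (hjac : ∀ x y z : L,
      bracket (α x) (bracket y z) + bracket (α y) (bracket z x)
        + bracket (α z) (bracket x y) = 0)
    (hmult : ∀ x y : L, α (bracket x y) = bracket (α x) (α y))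
    (ρ : L →ₗ[F] V →ₗ[F] V) (β : V ≃ₗ[F] V)
    (hrep1 : ∀ (x : L) (v : V), β (ρ x v) = ρ (α x) (β v))
    (hrep2 : ∀ (x y : L) (v : V),
      ρ (bracket x y) (β v) = ρ (α x) (ρ y v) - ρ (α y) (ρ x v))
    (δ : L →ₗ[F] L →ₗ[F] V)
    (hδskew : ∀ x y : L, δ x y = - δ y x)
    (hδβ : ∀ x y : L, β (δ x y) = δ (α x) (α y))
    (hδbider : ∀ x y z : L,
      δ (bracket x y) (α z) = ρ (α x) (δ y z) - ρ (α y) (δ x z)) :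
    (∀ x y u z w : L,
      ρ (bracket z w) (δ (α u) (bracket x y) - ρ (α u) (δ x y)) = 0) ∧
    (∀ x y u : L,
      ∀ s ∈ Submodule.span F {w : L | ∃ a b : L, bracket a b = w},
        ρ s (δ (α u) (bracket x y) - ρ (α u) (δ x y)) = 0) := by
  -- second-slot biderivation rule
  have hB2 : ∀ c d e : L, δ (α e) (bracket c d) = ρ (α d) (δ c e) - ρ (α c) (δ d e) := by
    intro c d e
    rw [hδskew (α e) (bracket c d), hδbider c d e]
    abel
  -- expansion of ρ([αa,αb]) δ(αc, αd)
  have hT : ∀ a b c d : L, ρ (bracket (α a) (α b)) (δ (α c) (α d))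
      = ρ (α (α a)) (ρ (α b) (δ c d)) - ρ (α (α b)) (ρ (α a) (δ c d)) := by
    intro a b c d
    have h := hrep2 (α a) (α b) (δ c d)
    rwa [hδβ] at h
  -- the four-term symmetric identity (from the two expansions of δ(α[a,c], α[b,d]))
  have hS4 : ∀ a b c d : L,
      ρ (bracket (α a) (α b)) (δ (α c) (α d)) + ρ (bracket (α c) (α d)) (δ (α a) (α b))
        + ρ (bracket (α a) (α d)) (δ (α b) (α c)) + ρ (bracket (α b) (α c)) (δ (α a) (α d))
        = 0 := by
    intro a b c d
    have e0 : δ (bracket (α a) (α c)) (α (bracket b d))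
        = - δ (bracket (α b) (α d)) (α (bracket a c)) := by
      rw [hmult b d, hmult a c]; exact hδskew _ _
    have e1 := hδbider (α a) (α c) (bracket b d)
    rw [hB2 b d c, hB2 b d a] at e1
    simp only [map_sub] at e1
    have e2 := hδbider (α b) (α d) (bracket a c)
    rw [hB2 a c d, hB2 a c b] at e2
    simp only [map_sub] at e2
    have f1 : ρ (α (α a)) (ρ (α b) (δ d c)) = - ρ (α (α a)) (ρ (α b) (δ c d)) := by
      rw [hδskew d c]; simp only [map_neg]
    have f2 : ρ (α (α c)) (ρ (α d) (δ b a)) = - ρ (α (α c)) (ρ (α d) (δ a b)) := by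
      rw [hδskew b a]; simp only [map_neg]
    have f3 : ρ (α (α c)) (ρ (α b) (δ d a)) = - ρ (α (α c)) (ρ (α b) (δ a d)) := by
      rw [hδskew d a]; simp only [map_neg]
    have f4 : ρ (α (α d)) (ρ (α a) (δ c b)) = - ρ (α (α d)) (ρ (α a) (δ b c)) := by
      rw [hδskew c b]; simp only [map_neg]
    linear_combination (norm := module)
      hT a b c d + hT c d a b + hT a d b c + hT b c a d
        + e0 - e1 - e2 + f1 + f2 - f3 - f4
  -- antisymmetry under swapping the two pairs, at shifted level
  have hR : ∀ a b c d : L,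
      ρ (bracket (α a) (α b)) (δ (α c) (α d)) + ρ (bracket (α c) (α d)) (δ (α a) (α b))
        = 0 := by
    intro a b c d
    have h1 := hS4 a b c d
    have h2 := hS4 a d b c
    have h3 := hS4 a c d b
    have h2R : (2 : F) • (ρ (bracket (α a) (α b)) (δ (α c) (α d))
        + ρ (bracket (α c) (α d)) (δ (α a) (α b))) = 0 := by
      linear_combination (norm := module) h1 - h2 + h3
    rcases smul_eq_zero.mp h2R with h | h
    · exact absurd h hchar
    · exact h
  -- de-shifted version, using invertibility of β
  have hR0 : ∀ a b c d : L,
      ρ (bracket a b) (δ c d) = - ρ (bracket c d) (δ a b) := by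
    intro a b c d
    have hb : β (ρ (bracket a b) (δ c d) + ρ (bracket c d) (δ a b)) = 0 := by
      rw [map_add, hrep1, hrep1, hδβ, hδβ, hmult, hmult]
      exact hR a b c d
    have h0 : ρ (bracket a b) (δ c d) + ρ (bracket c d) (δ a b) = 0 :=
      β.map_eq_zero_iff.mp hb
    linear_combination (norm := module) h0
  -- the main computation
  have main : ∀ x y u z w : L,
      ρ (bracket z w) (δ (α u) (bracket x y) - ρ (α u) (δ x y)) = 0 := by
    intro x y u z w
    have hm : ρ (bracket z w) (δ (α u) (bracket x y) - ρ (α u) (δ x y))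
        = ρ (bracket z w) (δ (α u) (bracket x y)) - ρ (bracket z w) (ρ (α u) (δ x y)) :=
      map_sub _ _ _
    have a1' : ρ (bracket z w) (δ (α u) (bracket x y))
        = ρ (bracket z w) (ρ (α y) (δ x u)) - ρ (bracket z w) (ρ (α x) (δ y u)) := by
      rw [hB2 x y u, map_sub]
    have b1 : ρ (bracket z w) (δ (α u) (bracket x y))
        = - ρ (bracket z w) (δ (bracket x y) (α u)) := by
      rw [hδskew (α u) (bracket x y), map_neg]
    have b2 : ρ (bracket z w) (δ (bracket x y) (α u))
        = - ρ (bracket (bracket x y) (α u)) (δ z w) := hR0 z w (bracket x y) (α u)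
    have jacL : bracket (bracket x y) (α u)
        = bracket (α x) (bracket y u) + bracket (α y) (bracket u x) := by
      rw [hskew (bracket x y) (α u)]
      linear_combination (norm := module) (-1 : F) • hjac x y u
    have b3 : ρ (bracket (bracket x y) (α u)) (δ z w)
        = ρ (bracket (α x) (bracket y u)) (δ z w)
          + ρ (bracket (α y) (bracket u x)) (δ z w) := by
      rw [jacL, map_add, LinearMap.add_apply]
    have c1 : ρ (bracket (α x) (bracket y u)) (δ z w)
        = - ρ (bracket z w) (δ (α x) (bracket y u)) := hR0 (α x) (bracket y u) z w
    have c2 : ρ (bracket (α y) (bracket u x)) (δ z w)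
        = - ρ (bracket z w) (δ (α y) (bracket u x)) := hR0 (α y) (bracket u x) z w
    have d1' : ρ (bracket z w) (δ (α x) (bracket y u))
        = ρ (bracket z w) (ρ (α u) (δ y x)) - ρ (bracket z w) (ρ (α y) (δ u x)) := by
      rw [hB2 y u x, map_sub]
    have d2' : ρ (bracket z w) (δ (α y) (bracket u x))
        = ρ (bracket z w) (ρ (α x) (δ u y)) - ρ (bracket z w) (ρ (α u) (δ x y)) := by
      rw [hB2 u x y, map_sub]
    have s1' : ρ (bracket z w) (ρ (α u) (δ y x))
        = - ρ (bracket z w) (ρ (α u) (δ x y)) := by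
      rw [hδskew y x]; simp only [map_neg]
    have s2' : ρ (bracket z w) (ρ (α y) (δ u x))
        = - ρ (bracket z w) (ρ (α y) (δ x u)) := by
      rw [hδskew u x]; simp only [map_neg]
    have s3' : ρ (bracket z w) (ρ (α x) (δ u y))
        = - ρ (bracket z w) (ρ (α x) (δ y u)) := by
      rw [hδskew u y]; simp only [map_neg]
    have h2X : (2 : F) • (ρ (bracket z w) (δ (α u) (bracket x y) - ρ (α u) (δ x y))) = 0 := by
      linear_combination (norm := module)
        (2 : F) • hm + a1' + b1 - b2 + b3 + c1 + c2 - d1' - d2' - s1' + s2' - s3'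
    rcases smul_eq_zero.mp h2X with h | h
    · exact absurd h hchar
    · exact h
  refine ⟨main, ?_⟩
  intro x y u s hs
  induction hs using Submodule.span_induction with
  | mem t ht =>
    obtain ⟨a, b, rfl⟩ := ht
    exact main x y u a b
  | zero => simp
  | add s t _ _ h1 h2 => rw [map_add, LinearMap.add_apply, h1, h2, add_zero]
  | smul c s _ h1 => rw [map_smul, LinearMap.smul_apply, h1, smul_zero]
end

section
/- Let (L, α) be a multiplicative Hom-Lie algebra over F that is perfect (L = L') with α surjective, let (V, ρ, β) be an (L, α)-module with β invertible, and let δ : L × L → V be a skew-symmetric biderivation. Then δ(z, [x,y]) = ρ(z)(δ(x,y)) for all x, y, z ∈ L. -/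
private lemma aux_double_zero {F M : Type*} [Field F] [AddCommGroup M] [Module F M]
    (h2 : (2 : F) ≠ 0) {v : M} (h : v + v = 0) : v = 0 := by
  have h' : (2 : F) • v = 0 := by rw [two_smul]; exact h
  rcases smul_eq_zero.mp h' with h'' | h''
  · exact absurd h'' h2
  · exact h''

/-- Lemma 3.5: if `(L, α)` is perfect with `α` surjective and
`β` is invertible, then `δ(z,[x,y]) = zδ(x,y)` for a skew-symmetric
biderivation `δ`. -/
theorem homLie_biderivation_lemma35
    {F L V : Type*} [Field F] [AddCommGroup L] [Module F L]
    [AddCommGroup V] [Module F V]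
    (hchar : (2 : F) ≠ 0)
    (bracket : L →ₗ[F] L →ₗ[F] L) (α : L →ₗ[F] L)
    (hskew : ∀ x y : L, bracket x y = - bracket y x)
    (hjac : ∀ x y z : L,
      bracket (α x) (bracket y z) + bracket (α y) (bracket z x)
        + bracket (α z) (bracket x y) = 0)
    (hmult : ∀ x y : L, α (bracket x y) = bracket (α x) (α y))
    (hperfect : Submodule.span F {w : L | ∃ a b : L, bracket a b = w} = ⊤)
    (hαsurj : Function.Surjective α)
    (ρ : L →ₗ[F] V →ₗ[F] V) (β : V ≃ₗ[F] V)
    (hrep1 : ∀ (x : L) (v : V), β (ρ x v) = ρ (α x) (β v))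
    (hrep2 : ∀ (x y : L) (v : V),
      ρ (bracket x y) (β v) = ρ (α x) (ρ y v) - ρ (α y) (ρ x v))
    (δ : L →ₗ[F] L →ₗ[F] V)
    (hδskew : ∀ x y : L, δ x y = - δ y x)
    (hδβ : ∀ x y : L, β (δ x y) = δ (α x) (α y))
    (hδbider : ∀ x y z : L,
      δ (bracket x y) (α z) = ρ (α x) (δ y z) - ρ (α y) (δ x z)) :
    ∀ x y z : L, δ z (bracket x y) = ρ z (δ x y) := by
  -- basic consequences of char ≠ 2
  have hbxx : ∀ x : L, bracket x x = 0 := by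
    intro x
    apply aux_double_zero hchar
    nth_rewrite 2 [hskew x x]
    exact add_neg_cancel _
  have hdxx : ∀ x : L, δ x x = 0 := by
    intro x
    apply aux_double_zero hchar
    nth_rewrite 2 [hδskew x x]
    exact add_neg_cancel _
  -- biderivation rule in the second slot
  have ruleA : ∀ x y z : L, δ (α z) (bracket x y)
      = ρ (α x) (δ z y) - ρ (α y) (δ z x) := by
    intro x y z
    rw [hδskew (α z) (bracket x y), hδbider x y z, hδskew y z, hδskew x z]
    simp only [map_neg]
    abel
  -- the fundamental quadrilinear identity, α-decorated version
  have I1a : ∀ x u y v : L,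
      ρ (bracket (α x) (α u)) (δ (α y) (α v)) - ρ (bracket (α x) (α v)) (δ (α y) (α u))
        - ρ (bracket (α y) (α u)) (δ (α x) (α v)) + ρ (bracket (α y) (α v)) (δ (α x) (α u))
        = 0 := by
    intro x u y v
    have e1 := hδbider (α x) (α y) (bracket u v)
    rw [ruleA u v y, ruleA u v x] at e1
    simp only [map_sub] at e1
    have e2 := hδbider (α u) (α v) (bracket x y)
    rw [ruleA x y v, ruleA x y u] at e2
    simp only [map_sub] at e2
    have e3 : δ (bracket (α x) (α y)) (α (bracket u v))
        = - δ (bracket (α u) (α v)) (α (bracket x y)) := by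
      rw [← hmult x y, ← hmult u v]
      exact hδskew _ _
    have q1 := hrep2 (α x) (α u) (δ y v); rw [hδβ] at q1
    have q2 := hrep2 (α x) (α v) (δ y u); rw [hδβ] at q2
    have q3 := hrep2 (α y) (α u) (δ x v); rw [hδβ] at q3
    have q4 := hrep2 (α y) (α v) (δ x u); rw [hδβ] at q4
    have c1 := congrArg (fun t => ρ (α (α u)) (ρ (α x) t)) (hδskew v y)
    simp only [map_neg] at c1
    have c2 := congrArg (fun t => ρ (α (α u)) (ρ (α y) t)) (hδskew v x)
    simp only [map_neg] at c2
    have c3 := congrArg (fun t => ρ (α (α v)) (ρ (α x) t)) (hδskew u y)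
    simp only [map_neg] at c3
    have c4 := congrArg (fun t => ρ (α (α v)) (ρ (α y) t)) (hδskew u x)
    simp only [map_neg] at c4
    linear_combination (norm := abel) q1 - q2 - q3 + q4 - e1 - e2 - c1 + c2 + c3 - c4 + e3
  -- stripped version, using surjectivity of α
  have I1 : ∀ x u y v : L,
      ρ (bracket x u) (δ y v) - ρ (bracket x v) (δ y u)
        - ρ (bracket y u) (δ x v) + ρ (bracket y v) (δ x u) = 0 := by
    intro x u y v
    obtain ⟨x', rfl⟩ := hαsurj x
    obtain ⟨u', rfl⟩ := hαsurj u
    obtain ⟨y', rfl⟩ := hαsurj y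
    obtain ⟨v', rfl⟩ := hαsurj v
    exact I1a x' u' y' v'
  -- diagonal specialization
  have s1 : ∀ x y v : L, ρ (bracket x y) (δ y v) = - ρ (bracket y v) (δ x y) := by
    intro x y v
    have h := I1 x y y v
    rw [hdxx y, hbxx y] at h
    simp only [map_zero, LinearMap.zero_apply] at h
    linear_combination (norm := abel) h
  -- polarized version
  have s2 : ∀ x y w v : L,
      ρ (bracket x y) (δ w v) + ρ (bracket x w) (δ y v)
        + ρ (bracket y v) (δ x w) + ρ (bracket w v) (δ x y) = 0 := by
    intro x y w v
    have h := s1 x (y + w) v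
    simp only [map_add, LinearMap.add_apply] at h
    linear_combination (norm := abel) h - s1 x y v - s1 x w v
  have s3 : ∀ x u y v : L,
      ρ (bracket x u) (δ y v) + ρ (bracket y v) (δ x u)
        = ρ (bracket x v) (δ y u) + ρ (bracket y u) (δ x v) := by
    intro x u y v
    linear_combination (norm := abel) I1 x u y v
  -- the key "B ≡ 0" identity
  have hB : ∀ p q r s : L, ρ (bracket p q) (δ r s) = - ρ (bracket r s) (δ p q) := by
    intro p q r s
    have e3a := congrArg (fun t => ρ (bracket p r) t) (hδskew s q)
    simp only [map_neg] at e3a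
    have e3b := congrArg (fun t => ρ t (δ p r)) (hskew s q)
    simp only [map_neg, LinearMap.neg_apply] at e3b
    have htt : (ρ (bracket p q) (δ r s) + ρ (bracket r s) (δ p q))
        + (ρ (bracket p q) (δ r s) + ρ (bracket r s) (δ p q)) = 0 := by
      linear_combination (norm := abel) s3 p q r s + s2 p s r q - e3a - e3b + s2 p r q s
    have h0 := aux_double_zero hchar htt
    linear_combination (norm := abel) h0
  -- the central vanishing result
  have heart : ∀ x y u v w : L,
      ρ (bracket u v) (δ w (bracket x y)) = ρ (bracket u v) (ρ w (δ x y)) := by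
    intro x y
    -- the "club" identity
    have club : ∀ a b c : L,
        ρ (bracket (α (α b)) (α c)) (δ (α (α a)) (bracket x y))
          - ρ (bracket (α (α b)) (α c)) (ρ (α (α a)) (δ x y))
        = ρ (bracket (α (α a)) (α c)) (δ (α (α b)) (bracket x y))
          - ρ (bracket (α (α a)) (α c)) (ρ (α (α b)) (δ x y)) := by
      intro a b c
      have A1 := hB (α x) (α y) (bracket (α a) (α b)) (α c)
      have A2' := congrArg (fun t => ρ (bracket (α x) (α y)) t) (hδbider (α a) (α b) c)
      simp only [map_sub] at A2'
      have A3 := hrep2 (bracket x y) (α (α a)) (δ (α b) c)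
      rw [hδβ, hmult x y] at A3
      have A4' := congrArg (fun t => ρ (α (α (α a))) t) (hB x y (α b) c)
      simp only [map_neg] at A4'
      have A5 := hrep2 (α (α a)) (bracket (α b) c) (δ x y)
      rw [hδβ, hmult (α b) c] at A5
      have A3b := hrep2 (bracket x y) (α (α b)) (δ (α a) c)
      rw [hδβ, hmult x y] at A3b
      have A4b' := congrArg (fun t => ρ (α (α (α b))) t) (hB x y (α a) c)
      simp only [map_neg] at A4b'
      have A5b := hrep2 (α (α b)) (bracket (α a) c) (δ x y)
      rw [hδβ, hmult (α a) c] at A5b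
      have A8 := hB (bracket x y) (α (α a)) (α (α b)) (α c)
      rw [hδskew (bracket x y) (α (α a))] at A8
      simp only [map_neg, neg_neg] at A8
      have A8b := hB (bracket x y) (α (α b)) (α (α a)) (α c)
      rw [hδskew (bracket x y) (α (α b))] at A8b
      simp only [map_neg, neg_neg] at A8b
      have J' : bracket (bracket (α a) (α b)) (α c)
          = bracket (α (α a)) (bracket (α b) c) + bracket (α (α b)) (bracket c (α a)) := by
        have hsk := hskew (bracket (α a) (α b)) (α c)
        linear_combination (norm := abel) hsk - hjac c (α a) (α b)
      have A7' := congrArg (fun t => ρ t (δ (α x) (α y))) J'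
      simp only [map_add, LinearMap.add_apply] at A7'
      have hw : bracket (α (α b)) (bracket c (α a))
          = - bracket (α (α b)) (bracket (α a) c) := by
        rw [hskew c (α a)]
        exact map_neg _ _
      have W5eq := congrArg (fun t => ρ t (δ (α x) (α y))) hw
      simp only [map_neg, LinearMap.neg_apply] at W5eq
      linear_combination (norm := abel) (- A8 + A3 - A4' - A5) + (A8b - A3b + A4b' + A5b)
        + (- A2' + A1 - A7' - W5eq)
    have spade : ∀ a b : L,
        ρ (bracket (α (α b)) (α (α a))) (δ (α (α a)) (bracket x y))
          - ρ (bracket (α (α b)) (α (α a))) (ρ (α (α a)) (δ x y)) = 0 := by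
      intro a b
      have h := club a b (α a)
      rw [hbxx (α (α a))] at h
      simp only [map_zero, LinearMap.zero_apply, sub_zero] at h
      exact h
    have pol : ∀ a b c : L,
        (ρ (bracket (α (α b)) (α (α a))) (δ (α (α c)) (bracket x y))
          - ρ (bracket (α (α b)) (α (α a))) (ρ (α (α c)) (δ x y)))
        + (ρ (bracket (α (α b)) (α (α c))) (δ (α (α a)) (bracket x y))
          - ρ (bracket (α (α b)) (α (α c))) (ρ (α (α a)) (δ x y))) = 0 := by
      intro a b c
      have h := spade (a + c) b
      simp only [map_add, LinearMap.add_apply] at h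
      linear_combination (norm := abel) h - spade a b - spade c b
    have sym13 : ∀ a b c : L,
        ρ (bracket (α (α b)) (α (α c))) (δ (α (α a)) (bracket x y))
          - ρ (bracket (α (α b)) (α (α c))) (ρ (α (α a)) (δ x y))
        = ρ (bracket (α (α a)) (α (α c))) (δ (α (α b)) (bracket x y))
          - ρ (bracket (α (α a)) (α (α c))) (ρ (α (α b)) (δ x y)) :=
      fun a b c => club a b (α c)
    have Wz : ∀ a b c : L,
        ρ (bracket (α (α b)) (α (α c))) (δ (α (α a)) (bracket x y))
          - ρ (bracket (α (α b)) (α (α c))) (ρ (α (α a)) (δ x y)) = 0 := by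
      intro a b c
      have hz : (ρ (bracket (α (α b)) (α (α c))) (δ (α (α a)) (bracket x y))
            - ρ (bracket (α (α b)) (α (α c))) (ρ (α (α a)) (δ x y)))
          + (ρ (bracket (α (α b)) (α (α c))) (δ (α (α a)) (bracket x y))
            - ρ (bracket (α (α b)) (α (α c))) (ρ (α (α a)) (δ x y))) = 0 := by
        linear_combination (norm := abel) sym13 a b c + pol c a b - sym13 c a b
          - pol b c a + sym13 b c a + pol a b c
      exact aux_double_zero hchar hz
    intro u v w
    obtain ⟨u₁, rfl⟩ := hαsurj u
    obtain ⟨u₂, rfl⟩ := hαsurj u₁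
    obtain ⟨v₁, rfl⟩ := hαsurj v
    obtain ⟨v₂, rfl⟩ := hαsurj v₁
    obtain ⟨w₁, rfl⟩ := hαsurj w
    obtain ⟨w₂, rfl⟩ := hαsurj w₁
    linear_combination (norm := abel) Wz w₂ u₂ v₂
  -- upgrade via perfectness : arbitrary first factor
  have heartz : ∀ z w x y : L,
      ρ z (δ w (bracket x y)) = ρ z (ρ w (δ x y)) := by
    intro z w x y
    have hsub : Submodule.span F {w' : L | ∃ a b : L, bracket a b = w'}
        ≤ LinearMap.ker (LinearMap.flip ρ (δ w (bracket x y) - ρ w (δ x y))) := by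
      apply Submodule.span_le.mpr
      rintro _ ⟨a, b, rfl⟩
      simp only [SetLike.mem_coe, LinearMap.mem_ker, map_sub, LinearMap.sub_apply, LinearMap.flip_apply]
      linear_combination (norm := abel) heart x y a b w
    have hmem : z ∈ Submodule.span F {w' : L | ∃ a b : L, bracket a b = w'} := by
      rw [hperfect]; exact Submodule.mem_top
    have h0 := LinearMap.mem_ker.mp (hsub hmem)
    simp only [map_sub, LinearMap.sub_apply, LinearMap.flip_apply] at h0
    linear_combination (norm := abel) h0
  -- the final statement
  intro x y z
  obtain ⟨x₁, rfl⟩ := hαsurj x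
  obtain ⟨y₁, rfl⟩ := hαsurj y
  have hker : Submodule.span F {w : L | ∃ a b : L, bracket a b = w}
      ≤ LinearMap.ker (LinearMap.flip δ (bracket (α x₁) (α y₁))
          - LinearMap.flip ρ (δ (α x₁) (α y₁))) := by
    apply Submodule.span_le.mpr
    rintro _ ⟨a, b, rfl⟩
    simp only [SetLike.mem_coe, LinearMap.mem_ker, LinearMap.sub_apply, LinearMap.flip_apply]
    have h1 := heartz (α a) b x₁ y₁
    have h2 := heartz (α b) a x₁ y₁
    have h3 := hrep2 a b (δ x₁ y₁)
    rw [hδβ] at h3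
    have h4 := hδbider a b (bracket x₁ y₁)
    rw [hmult x₁ y₁] at h4
    linear_combination (norm := abel) h4 + h1 - h2 - h3
  have hmem : z ∈ Submodule.span F {w : L | ∃ a b : L, bracket a b = w} := by
    rw [hperfect]; exact Submodule.mem_top
  have h0 := LinearMap.mem_ker.mp (hker hmem)
  simp only [LinearMap.sub_apply, LinearMap.flip_apply] at h0
  linear_combination (norm := abel) h0
end

section
/- Let (L, α) be a perfect multiplicative Hom-Lie algebra over F with α surjective, and let (V, ρ, β) be an (L, α)-module with β invertible such that Z_V(L) = {0}. Then for every skew-symmetric biderivation δ : L × L → V there exists a linear map γ : L → V in the centroid Cent(L, V) such that δ(x, y) = β⁻¹(γ([x,y])) for all x, y ∈ L. -/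
set_option maxHeartbeats 4000000

/-- Theorem 3.6: over a perfect Hom-Lie algebra with `α`
surjective and a module with `β` invertible and `Z_V(L) = 0`, every
skew-symmetric biderivation is of the form `δ(x,y) = β⁻¹(γ([x,y]))` for some
`γ` in the centroid. -/
theorem homLie_biderivation_from_centroid
    {F L V : Type*} [Field F] [AddCommGroup L] [Module F L]
    [AddCommGroup V] [Module F V]
    (hchar : (2 : F) ≠ 0)
    (bracket : L →ₗ[F] L →ₗ[F] L) (α : L →ₗ[F] L)
    (hskew : ∀ x y : L, bracket x y = - bracket y x)
    (hjac : ∀ x y z : L,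
      bracket (α x) (bracket y z) + bracket (α y) (bracket z x)
        + bracket (α z) (bracket x y) = 0)
    (hmult : ∀ x y : L, α (bracket x y) = bracket (α x) (α y))
    (hperfect : Submodule.span F {w : L | ∃ a b : L, bracket a b = w} = ⊤)
    (hαsurj : Function.Surjective α)
    (ρ : L →ₗ[F] V →ₗ[F] V) (β : V ≃ₗ[F] V)
    (hrep1 : ∀ (x : L) (v : V), β (ρ x v) = ρ (α x) (β v))
    (hrep2 : ∀ (x y : L) (v : V),
      ρ (bracket x y) (β v) = ρ (α x) (ρ y v) - ρ (α y) (ρ x v))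
    (hZV : ∀ v : V, (∀ x : L, ρ x v = 0) → v = 0)
    (δ : L →ₗ[F] L →ₗ[F] V)
    (hδskew : ∀ x y : L, δ x y = - δ y x)
    (hδβ : ∀ x y : L, β (δ x y) = δ (α x) (α y))
    (hδbider : ∀ x y z : L,
      δ (bracket x y) (α z) = ρ (α x) (δ y z) - ρ (α y) (δ x z)) :
    ∃ γ : L →ₗ[F] V,
      (∀ x y : L, γ (bracket x y) = ρ (α x) (γ y)) ∧
      (∀ x : L, β (γ x) = γ (α x)) ∧
      (∀ x y : L, δ x y = β.symm (γ (bracket x y))) := by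
  have key : ∀ u v x a b : L,
      (4 : F) • ((ρ (bracket (α u) (α v)) (δ (bracket (α (α a)) (α (α b))) (α (α x)))) + (ρ (bracket (α u) (α v)) (ρ (α (α x)) (δ (α (α a)) (α (α b)))))) = 0 := by
    intro u v x a b
    have h0 := hδbider (α (α a)) (α (α b)) (α x)
    replace h0 := congrArg (⇑(ρ (bracket (α u) (α v)))) h0
    simp only [map_add, map_sub, map_neg, map_zero] at h0
    have h1 := hrep2 (α v) (α u) (δ (bracket (α a) x) (α (α b)))
    simp only [hrep1, hδβ] at h1
    simp only [hmult] at h1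
    rw [hskew (α v) (α u)] at h1
    try simp only [map_neg, LinearMap.neg_apply, neg_neg] at h1
    have h2 := hδbider (α x) (α (α a)) (α (α b))
    replace h2 := congrArg (⇑(ρ (bracket (α u) (α v)))) h2
    simp only [map_add, map_sub, map_neg, map_zero] at h2
    rw [hskew (α x) (α (α a))] at h2
    try simp only [map_neg, LinearMap.neg_apply, neg_neg] at h2
    rw [hδskew (α x) (α (α b))] at h2
    try simp only [map_neg, LinearMap.neg_apply, neg_neg] at h2
    have h3 := hδbider (bracket (α a) x) v (α (α b))
    replace h3 := congrArg (⇑(ρ (α (α u)))) h3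
    simp only [map_add, map_sub, map_neg, map_zero] at h3
    simp only [hmult] at h3
    rw [hδskew v (α (α b))] at h3
    try simp only [map_neg, LinearMap.neg_apply, neg_neg] at h3
    have h4 := hδbider (bracket (α (α b)) u) (bracket (α (α a)) (α x)) (α v)
    simp only [hmult] at h4
    rw [hskew (bracket (α (α b)) u) (bracket (α (α a)) (α x))] at h4
    try simp only [map_neg, LinearMap.neg_apply, neg_neg] at h4
    have h5 := hδbider (bracket (bracket (α a) x) u) (α (α (α b))) (α v)
    simp only [hmult] at h5
    have h6 := hδbider (bracket (bracket (α a) x) (α (α b))) (α u) (α v)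
    simp only [hmult] at h6
    have h7 := congrArg (fun w => δ w (α (α v))) (hjac u (bracket (α a) x) (α (α b)))
    simp only [map_add, map_zero, LinearMap.add_apply, LinearMap.zero_apply] at h7
    simp only [hmult] at h7
    rw [hskew (α u) (bracket (bracket (α a) x) (α (α b)))] at h7
    try simp only [map_neg, LinearMap.neg_apply, neg_neg] at h7
    rw [hskew u (bracket (α a) x)] at h7
    try simp only [map_neg, LinearMap.neg_apply, neg_neg] at h7
    rw [hskew (α (α (α b))) (bracket (bracket (α a) x) u)] at h7
    try simp only [map_neg, LinearMap.neg_apply, neg_neg] at h7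
    have h8 := hrep2 (α u) (bracket (α (α a)) (α x)) (δ (α (α b)) v)
    simp only [hrep1, hδβ] at h8
    simp only [hmult] at h8
    rw [hskew (α u) (bracket (α (α a)) (α x))] at h8
    try simp only [map_neg, LinearMap.neg_apply, neg_neg] at h8
    have h9 := hrep2 (bracket (α (α a)) (α x)) (α v) (δ (α (α b)) u)
    simp only [hrep1, hδβ] at h9
    simp only [hmult] at h9
    have h10 := hδbider (bracket u v) (α (α (α b))) (bracket (α (α a)) (α x))
    simp only [hmult] at h10
    rw [hδskew (α (α (α b))) (bracket (α (α a)) (α x))] at h10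
    try simp only [map_neg, LinearMap.neg_apply, neg_neg] at h10
    rw [hδskew (bracket u v) (bracket (α (α a)) (α x))] at h10
    try simp only [map_neg, LinearMap.neg_apply, neg_neg] at h10
    have h11 := congrArg (fun w => δ w (bracket (α (α (α a))) (α (α x)))) (hjac u (α (α b)) v)
    simp only [map_add, map_zero, LinearMap.add_apply, LinearMap.zero_apply] at h11
    rw [hskew (α u) (bracket (α (α b)) v)] at h11
    try simp only [map_neg, LinearMap.neg_apply, neg_neg] at h11
    rw [hskew v u] at h11
    try simp only [map_neg, LinearMap.neg_apply, neg_neg] at h11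
    rw [hskew (α (α (α b))) (bracket u v)] at h11
    try simp only [map_neg, LinearMap.neg_apply, neg_neg] at h11
    rw [hskew u (α (α b))] at h11
    try simp only [map_neg, LinearMap.neg_apply, neg_neg] at h11
    rw [hskew (α v) (bracket (α (α b)) u)] at h11
    try simp only [map_neg, LinearMap.neg_apply, neg_neg] at h11
    have h12 := hδbider (bracket (α (α b)) u) (α v) (bracket (α (α a)) (α x))
    simp only [hmult] at h12
    rw [hδskew (α v) (bracket (α (α a)) (α x))] at h12
    try simp only [map_neg, LinearMap.neg_apply, neg_neg] at h12
    rw [hδskew (bracket (α (α b)) u) (bracket (α (α a)) (α x))] at h12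
    try simp only [map_neg, LinearMap.neg_apply, neg_neg] at h12
    have h13 := hδbider (bracket (α (α b)) v) (α u) (bracket (α (α a)) (α x))
    simp only [hmult] at h13
    rw [hδskew (α u) (bracket (α (α a)) (α x))] at h13
    try simp only [map_neg, LinearMap.neg_apply, neg_neg] at h13
    rw [hδskew (bracket (α (α b)) v) (bracket (α (α a)) (α x))] at h13
    try simp only [map_neg, LinearMap.neg_apply, neg_neg] at h13
    have h14 := hδbider (α (α (α b))) (bracket (bracket (α a) x) v) (α u)
    simp only [hmult] at h14
    rw [hskew (α (α (α b))) (bracket (bracket (α a) x) v)] at h14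
    try simp only [map_neg, LinearMap.neg_apply, neg_neg] at h14
    have h15 := hδbider (α v) (bracket (bracket (α a) x) (α (α b))) (α u)
    simp only [hmult] at h15
    rw [hskew (α v) (bracket (bracket (α a) x) (α (α b)))] at h15
    try simp only [map_neg, LinearMap.neg_apply, neg_neg] at h15
    rw [hδskew (α v) (α u)] at h15
    try simp only [map_neg, LinearMap.neg_apply, neg_neg] at h15
    have h16 := congrArg (fun w => δ w (α (α u))) (hjac v (bracket (α a) x) (α (α b)))
    simp only [map_add, map_zero, LinearMap.add_apply, LinearMap.zero_apply] at h16
    simp only [hmult] at h16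
    rw [hskew (α v) (bracket (bracket (α a) x) (α (α b)))] at h16
    try simp only [map_neg, LinearMap.neg_apply, neg_neg] at h16
    rw [hskew v (bracket (α a) x)] at h16
    try simp only [map_neg, LinearMap.neg_apply, neg_neg] at h16
    rw [hskew (α (α (α b))) (bracket (bracket (α a) x) v)] at h16
    try simp only [map_neg, LinearMap.neg_apply, neg_neg] at h16
    have h17 := hδbider (bracket (α (α b)) v) (bracket (α (α a)) (α x)) (α u)
    simp only [hmult] at h17
    rw [hskew (bracket (α (α b)) v) (bracket (α (α a)) (α x))] at h17
    try simp only [map_neg, LinearMap.neg_apply, neg_neg] at h17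
    have h18 := hδbider (α (α (α b))) (α v) (bracket (bracket (α a) x) u)
    simp only [hmult] at h18
    rw [hδskew (bracket (α (α (α b))) (α v)) (bracket (bracket (α (α a)) (α x)) (α u))] at h18
    try simp only [map_neg, LinearMap.neg_apply, neg_neg] at h18
    rw [hδskew (α v) (bracket (bracket (α a) x) u)] at h18
    try simp only [map_neg, LinearMap.neg_apply, neg_neg] at h18
    rw [hδskew (α (α (α b))) (bracket (bracket (α a) x) u)] at h18
    try simp only [map_neg, LinearMap.neg_apply, neg_neg] at h18
    have h19 := hδbider (bracket (α (α a)) (α x)) (α u) (bracket (α (α b)) v)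
    simp only [hmult] at h19
    rw [hδskew (α u) (bracket (α (α b)) v)] at h19
    try simp only [map_neg, LinearMap.neg_apply, neg_neg] at h19
    have h20 := congrArg (fun w => ρ w (δ (α u) (α v))) (hjac (α (α b)) (α (α a)) (α x))
    simp only [map_add, map_zero, LinearMap.add_apply, LinearMap.zero_apply] at h20
    rw [hskew (α (α (α b))) (bracket (α (α a)) (α x))] at h20
    try simp only [map_neg, LinearMap.neg_apply, neg_neg] at h20
    rw [hskew (α x) (α (α b))] at h20
    try simp only [map_neg, LinearMap.neg_apply, neg_neg] at h20
    rw [hskew (α (α (α a))) (bracket (α (α b)) (α x))] at h20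
    try simp only [map_neg, LinearMap.neg_apply, neg_neg] at h20
    rw [hskew (α (α b)) (α (α a))] at h20
    try simp only [map_neg, LinearMap.neg_apply, neg_neg] at h20
    rw [hskew (α (α x)) (bracket (α (α a)) (α (α b)))] at h20
    try simp only [map_neg, LinearMap.neg_apply, neg_neg] at h20
    have h21 := hδbider (α v) (α (α x)) (bracket (bracket (α a) (α b)) u)
    simp only [hmult] at h21
    rw [hδskew (bracket (α v) (α (α x))) (bracket (bracket (α (α a)) (α (α b))) (α u))] at h21
    try simp only [map_neg, LinearMap.neg_apply, neg_neg] at h21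
    rw [hδskew (α (α x)) (bracket (bracket (α a) (α b)) u)] at h21
    try simp only [map_neg, LinearMap.neg_apply, neg_neg] at h21
    rw [hδskew (α v) (bracket (bracket (α a) (α b)) u)] at h21
    try simp only [map_neg, LinearMap.neg_apply, neg_neg] at h21
    have h22 := hδbider (α u) (bracket (α (α a)) (α (α b))) (bracket v (α x))
    simp only [hmult] at h22
    rw [hskew (α u) (bracket (α (α a)) (α (α b)))] at h22
    try simp only [map_neg, LinearMap.neg_apply, neg_neg] at h22
    rw [hδskew (α u) (bracket v (α x))] at h22
    try simp only [map_neg, LinearMap.neg_apply, neg_neg] at h22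
    have h23 := hδbider (α (α (α a))) (α v) (bracket (bracket (α b) x) u)
    simp only [hmult] at h23
    rw [hδskew (bracket (α (α (α a))) (α v)) (bracket (bracket (α (α b)) (α x)) (α u))] at h23
    try simp only [map_neg, LinearMap.neg_apply, neg_neg] at h23
    rw [hδskew (α v) (bracket (bracket (α b) x) u)] at h23
    try simp only [map_neg, LinearMap.neg_apply, neg_neg] at h23
    rw [hδskew (α (α (α a))) (bracket (bracket (α b) x) u)] at h23
    try simp only [map_neg, LinearMap.neg_apply, neg_neg] at h23
    have h24 := hδbider (bracket (α (α b)) (α x)) (bracket (α (α a)) u) (α v)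
    simp only [hmult] at h24
    rw [hskew (bracket (α (α b)) (α x)) (bracket (α (α a)) u)] at h24
    try simp only [map_neg, LinearMap.neg_apply, neg_neg] at h24
    have h25 := hδbider (α (α (α a))) (bracket (bracket (α b) x) u) (α v)
    simp only [hmult] at h25
    rw [hskew (α (α (α a))) (bracket (bracket (α b) x) u)] at h25
    try simp only [map_neg, LinearMap.neg_apply, neg_neg] at h25
    have h26 := congrArg (fun w => δ w (α (α v))) (hjac u (α (α a)) (bracket (α b) x))
    simp only [map_add, map_zero, LinearMap.add_apply, LinearMap.zero_apply] at h26
    simp only [hmult] at h26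
    rw [hskew (α (α a)) (bracket (α b) x)] at h26
    try simp only [map_neg, LinearMap.neg_apply, neg_neg] at h26
    rw [hskew (α u) (bracket (bracket (α b) x) (α (α a)))] at h26
    try simp only [map_neg, LinearMap.neg_apply, neg_neg] at h26
    rw [hskew (α (α (α a))) (bracket (bracket (α b) x) u)] at h26
    try simp only [map_neg, LinearMap.neg_apply, neg_neg] at h26
    rw [hskew u (α (α a))] at h26
    try simp only [map_neg, LinearMap.neg_apply, neg_neg] at h26
    rw [hskew (bracket (α (α b)) (α x)) (bracket (α (α a)) u)] at h26
    try simp only [map_neg, LinearMap.neg_apply, neg_neg] at h26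
    have h27 := hδbider (α u) (bracket (bracket (α b) x) (α (α a))) (α v)
    simp only [hmult] at h27
    rw [hskew (α u) (bracket (bracket (α b) x) (α (α a)))] at h27
    try simp only [map_neg, LinearMap.neg_apply, neg_neg] at h27
    have h28 := hδbider (bracket (α (α b)) (α x)) (α v) (bracket (α (α a)) u)
    simp only [hmult] at h28
    rw [hδskew (α v) (bracket (α (α a)) u)] at h28
    try simp only [map_neg, LinearMap.neg_apply, neg_neg] at h28
    rw [hδskew (bracket (α (α b)) (α x)) (bracket (α (α a)) u)] at h28
    try simp only [map_neg, LinearMap.neg_apply, neg_neg] at h28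
    have h29 := hδbider (α u) (α (α (α a))) (bracket (bracket (α b) x) v)
    simp only [hmult] at h29
    rw [hskew (α u) (α (α (α a)))] at h29
    try simp only [map_neg, LinearMap.neg_apply, neg_neg] at h29
    rw [hδskew (bracket (α (α (α a))) (α u)) (bracket (bracket (α (α b)) (α x)) (α v))] at h29
    try simp only [map_neg, LinearMap.neg_apply, neg_neg] at h29
    rw [hδskew (α (α (α a))) (bracket (bracket (α b) x) v)] at h29
    try simp only [map_neg, LinearMap.neg_apply, neg_neg] at h29
    rw [hδskew (α u) (bracket (bracket (α b) x) v)] at h29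
    try simp only [map_neg, LinearMap.neg_apply, neg_neg] at h29
    have h30 := hδbider (bracket (α (α b)) (α x)) (bracket (α (α a)) v) (α u)
    simp only [hmult] at h30
    rw [hskew (bracket (α (α b)) (α x)) (bracket (α (α a)) v)] at h30
    try simp only [map_neg, LinearMap.neg_apply, neg_neg] at h30
    have h31 := hδbider (α (α (α a))) (bracket (bracket (α b) x) v) (α u)
    simp only [hmult] at h31
    rw [hskew (α (α (α a))) (bracket (bracket (α b) x) v)] at h31
    try simp only [map_neg, LinearMap.neg_apply, neg_neg] at h31
    have h32 := hδbider (bracket (bracket (α b) x) (α (α a))) (α v) (α u)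
    simp only [hmult] at h32
    rw [hδskew (α v) (α u)] at h32
    try simp only [map_neg, LinearMap.neg_apply, neg_neg] at h32
    have h33 := congrArg (fun w => δ w (α (α u))) (hjac (α (α a)) (bracket (α b) x) v)
    simp only [map_add, map_zero, LinearMap.add_apply, LinearMap.zero_apply] at h33
    simp only [hmult] at h33
    rw [hskew (α (α (α a))) (bracket (bracket (α b) x) v)] at h33
    try simp only [map_neg, LinearMap.neg_apply, neg_neg] at h33
    rw [hskew v (α (α a))] at h33
    try simp only [map_neg, LinearMap.neg_apply, neg_neg] at h33
    rw [hskew (bracket (α (α b)) (α x)) (bracket (α (α a)) v)] at h33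
    try simp only [map_neg, LinearMap.neg_apply, neg_neg] at h33
    rw [hskew (α (α a)) (bracket (α b) x)] at h33
    try simp only [map_neg, LinearMap.neg_apply, neg_neg] at h33
    rw [hskew (α v) (bracket (bracket (α b) x) (α (α a)))] at h33
    try simp only [map_neg, LinearMap.neg_apply, neg_neg] at h33
    have h34 := hδbider u v (α (α a))
    replace h34 := congrArg (⇑(ρ (bracket (α (α (α b))) (α (α x))))) h34
    simp only [map_add, map_sub, map_neg, map_zero] at h34
    rw [hδskew v (α (α a))] at h34
    try simp only [map_neg, LinearMap.neg_apply, neg_neg] at h34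
    rw [hδskew u (α (α a))] at h34
    try simp only [map_neg, LinearMap.neg_apply, neg_neg] at h34
    have h35 := hδbider (α (α (α a))) (bracket (α (α b)) (α x)) (bracket u v)
    simp only [hmult] at h35
    rw [hskew (α (α (α a))) (bracket (α (α b)) (α x))] at h35
    try simp only [map_neg, LinearMap.neg_apply, neg_neg] at h35
    rw [hδskew (α (α (α a))) (bracket u v)] at h35
    try simp only [map_neg, LinearMap.neg_apply, neg_neg] at h35
    have h36 := hδbider (α v) (bracket (α (α a)) u) (bracket (α (α b)) (α x))
    simp only [hmult] at h36
    rw [hskew (α v) (bracket (α (α a)) u)] at h36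
    try simp only [map_neg, LinearMap.neg_apply, neg_neg] at h36
    rw [hδskew (α v) (bracket (α (α b)) (α x))] at h36
    try simp only [map_neg, LinearMap.neg_apply, neg_neg] at h36
    have h37 := congrArg (fun w => δ w (bracket (α (α (α b))) (α (α x)))) (hjac u (α (α a)) v)
    simp only [map_add, map_zero, LinearMap.add_apply, LinearMap.zero_apply] at h37
    rw [hskew (α u) (bracket (α (α a)) v)] at h37
    try simp only [map_neg, LinearMap.neg_apply, neg_neg] at h37
    rw [hskew v u] at h37
    try simp only [map_neg, LinearMap.neg_apply, neg_neg] at h37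
    rw [hskew (α (α (α a))) (bracket u v)] at h37
    try simp only [map_neg, LinearMap.neg_apply, neg_neg] at h37
    rw [hskew u (α (α a))] at h37
    try simp only [map_neg, LinearMap.neg_apply, neg_neg] at h37
    rw [hskew (α v) (bracket (α (α a)) u)] at h37
    try simp only [map_neg, LinearMap.neg_apply, neg_neg] at h37
    have h38 := hδbider (bracket (α (α a)) v) (α u) (bracket (α (α b)) (α x))
    simp only [hmult] at h38
    rw [hδskew (α u) (bracket (α (α b)) (α x))] at h38
    try simp only [map_neg, LinearMap.neg_apply, neg_neg] at h38
    have h39 := hδbider (bracket u v) (α (α (α a))) (bracket (α (α b)) (α x))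
    simp only [hmult] at h39
    rw [hδskew (α (α (α a))) (bracket (α (α b)) (α x))] at h39
    try simp only [map_neg, LinearMap.neg_apply, neg_neg] at h39
    rw [hδskew (bracket u v) (bracket (α (α b)) (α x))] at h39
    try simp only [map_neg, LinearMap.neg_apply, neg_neg] at h39
    have h40 := hδbider (α u) (α (α (α b))) (bracket (bracket (α a) x) v)
    simp only [hmult] at h40
    rw [hskew (α u) (α (α (α b)))] at h40
    try simp only [map_neg, LinearMap.neg_apply, neg_neg] at h40
    rw [hδskew (bracket (α (α (α b))) (α u)) (bracket (bracket (α (α a)) (α x)) (α v))] at h40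
    try simp only [map_neg, LinearMap.neg_apply, neg_neg] at h40
    rw [hδskew (α (α (α b))) (bracket (bracket (α a) x) v)] at h40
    try simp only [map_neg, LinearMap.neg_apply, neg_neg] at h40
    rw [hδskew (α u) (bracket (bracket (α a) x) v)] at h40
    try simp only [map_neg, LinearMap.neg_apply, neg_neg] at h40
    have h41 := congrArg (fun w => δ w (bracket (α u) (α v))) (hjac (α (α a)) (α x) (α (α b)))
    simp only [map_add, map_zero, LinearMap.add_apply, LinearMap.zero_apply] at h41
    rw [hskew (α x) (α (α b))] at h41
    try simp only [map_neg, LinearMap.neg_apply, neg_neg] at h41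
    rw [hskew (α (α (α a))) (bracket (α (α b)) (α x))] at h41
    try simp only [map_neg, LinearMap.neg_apply, neg_neg] at h41
    rw [hskew (α (α b)) (α (α a))] at h41
    try simp only [map_neg, LinearMap.neg_apply, neg_neg] at h41
    rw [hskew (α (α x)) (bracket (α (α a)) (α (α b)))] at h41
    try simp only [map_neg, LinearMap.neg_apply, neg_neg] at h41
    rw [hskew (α (α (α b))) (bracket (α (α a)) (α x))] at h41
    try simp only [map_neg, LinearMap.neg_apply, neg_neg] at h41
    have h42 := hδbider (α (α (α b))) (bracket (α (α a)) (α x)) (bracket u v)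
    simp only [hmult] at h42
    rw [hskew (α (α (α b))) (bracket (α (α a)) (α x))] at h42
    try simp only [map_neg, LinearMap.neg_apply, neg_neg] at h42
    rw [hδskew (α (α (α b))) (bracket u v)] at h42
    try simp only [map_neg, LinearMap.neg_apply, neg_neg] at h42
    have h43 := hδbider v u (α (α b))
    replace h43 := congrArg (⇑(ρ (bracket (α (α (α a))) (α (α x))))) h43
    simp only [map_add, map_sub, map_neg, map_zero] at h43
    rw [hskew v u] at h43
    try simp only [map_neg, LinearMap.neg_apply, neg_neg] at h43
    rw [hδskew u (α (α b))] at h43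
    try simp only [map_neg, LinearMap.neg_apply, neg_neg] at h43
    rw [hδskew v (α (α b))] at h43
    try simp only [map_neg, LinearMap.neg_apply, neg_neg] at h43
    have h44 := hδbider (bracket (α (α b)) (α x)) (α u) (bracket (α (α a)) v)
    simp only [hmult] at h44
    rw [hδskew (α u) (bracket (α (α a)) v)] at h44
    try simp only [map_neg, LinearMap.neg_apply, neg_neg] at h44
    rw [hδskew (bracket (α (α b)) (α x)) (bracket (α (α a)) v)] at h44
    try simp only [map_neg, LinearMap.neg_apply, neg_neg] at h44
    have h45 := hrep2 (α v) (bracket (α (α b)) (α x)) (δ (α (α a)) u)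
    simp only [hrep1, hδβ] at h45
    simp only [hmult] at h45
    rw [hskew (α v) (bracket (α (α b)) (α x))] at h45
    try simp only [map_neg, LinearMap.neg_apply, neg_neg] at h45
    have h46 := hδbider (bracket (α (α a)) (α (α b))) (α (α x)) (bracket u v)
    simp only [hmult] at h46
    rw [hδskew (α (α x)) (bracket u v)] at h46
    try simp only [map_neg, LinearMap.neg_apply, neg_neg] at h46
    have h47 := hδbider v u (α x)
    replace h47 := congrArg (⇑(ρ (bracket (α (α (α a))) (α (α (α b)))))) h47
    simp only [map_add, map_sub, map_neg, map_zero] at h47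
    rw [hskew v u] at h47
    try simp only [map_neg, LinearMap.neg_apply, neg_neg] at h47
    have h48 := hδbider (α v) (bracket (α (α a)) (α (α b))) (bracket u (α x))
    simp only [hmult] at h48
    rw [hskew (α v) (bracket (α (α a)) (α (α b)))] at h48
    try simp only [map_neg, LinearMap.neg_apply, neg_neg] at h48
    rw [hδskew (α v) (bracket u (α x))] at h48
    try simp only [map_neg, LinearMap.neg_apply, neg_neg] at h48
    have h49 := hδbider (α (α x)) (α u) (bracket (bracket (α a) (α b)) v)
    simp only [hmult] at h49
    rw [hskew (α (α x)) (α u)] at h49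
    try simp only [map_neg, LinearMap.neg_apply, neg_neg] at h49
    rw [hδskew (bracket (α u) (α (α x))) (bracket (bracket (α (α a)) (α (α b))) (α v))] at h49
    try simp only [map_neg, LinearMap.neg_apply, neg_neg] at h49
    rw [hδskew (α u) (bracket (bracket (α a) (α b)) v)] at h49
    try simp only [map_neg, LinearMap.neg_apply, neg_neg] at h49
    rw [hδskew (α (α x)) (bracket (bracket (α a) (α b)) v)] at h49
    try simp only [map_neg, LinearMap.neg_apply, neg_neg] at h49
    have h50 := hδbider (α v) (bracket (α (α a)) (α x)) (bracket (α (α b)) u)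
    simp only [hmult] at h50
    rw [hskew (α v) (bracket (α (α a)) (α x))] at h50
    try simp only [map_neg, LinearMap.neg_apply, neg_neg] at h50
    rw [hδskew (α v) (bracket (α (α b)) u)] at h50
    try simp only [map_neg, LinearMap.neg_apply, neg_neg] at h50
    have h51 := hrep2 (α v) (α u) (δ (bracket (α b) x) (α (α a)))
    simp only [hrep1, hδβ] at h51
    simp only [hmult] at h51
    rw [hskew (α v) (α u)] at h51
    try simp only [map_neg, LinearMap.neg_apply, neg_neg] at h51
    have h52 := hrep2 (bracket (α (α b)) (α x)) (α u) (δ (α (α a)) v)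
    simp only [hrep1, hδβ] at h52
    simp only [hmult] at h52
    have h53 := hδbider (bracket (α a) (α b)) v (α x)
    replace h53 := congrArg (⇑(ρ (α (α u)))) h53
    simp only [map_add, map_sub, map_neg, map_zero] at h53
    simp only [hmult] at h53
    have h54 := congrArg (fun w => δ w (α v)) (hjac (α a) x (α b))
    simp only [map_add, map_zero, LinearMap.add_apply, LinearMap.zero_apply] at h54
    replace h54 := congrArg (⇑(ρ (α (α u)))) h54
    simp only [map_add, map_sub, map_neg, map_zero] at h54
    rw [hskew x (α b)] at h54
    try simp only [map_neg, LinearMap.neg_apply, neg_neg] at h54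
    rw [hskew (α (α a)) (bracket (α b) x)] at h54
    try simp only [map_neg, LinearMap.neg_apply, neg_neg] at h54
    rw [hskew (α b) (α a)] at h54
    try simp only [map_neg, LinearMap.neg_apply, neg_neg] at h54
    rw [hskew (α x) (bracket (α a) (α b))] at h54
    try simp only [map_neg, LinearMap.neg_apply, neg_neg] at h54
    rw [hskew (α (α b)) (bracket (α a) x)] at h54
    try simp only [map_neg, LinearMap.neg_apply, neg_neg] at h54
    have h55 := hδbider v (bracket (α b) x) (α (α a))
    replace h55 := congrArg (⇑(ρ (α (α u)))) h55
    simp only [map_add, map_sub, map_neg, map_zero] at h55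
    simp only [hmult] at h55
    rw [hskew v (bracket (α b) x)] at h55
    try simp only [map_neg, LinearMap.neg_apply, neg_neg] at h55
    rw [hδskew v (α (α a))] at h55
    try simp only [map_neg, LinearMap.neg_apply, neg_neg] at h55
    have h56 := hδbider (α (α a)) v (bracket (α b) x)
    replace h56 := congrArg (⇑(ρ (α (α u)))) h56
    simp only [map_add, map_sub, map_neg, map_zero] at h56
    simp only [hmult] at h56
    rw [hδskew v (bracket (α b) x)] at h56
    try simp only [map_neg, LinearMap.neg_apply, neg_neg] at h56
    rw [hδskew (α (α a)) (bracket (α b) x)] at h56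
    try simp only [map_neg, LinearMap.neg_apply, neg_neg] at h56
    have h57 := hδbider v (α (α b)) (bracket (α a) x)
    replace h57 := congrArg (⇑(ρ (α (α u)))) h57
    simp only [map_add, map_sub, map_neg, map_zero] at h57
    simp only [hmult] at h57
    rw [hskew v (α (α b))] at h57
    try simp only [map_neg, LinearMap.neg_apply, neg_neg] at h57
    rw [hδskew (bracket (α (α b)) v) (bracket (α (α a)) (α x))] at h57
    try simp only [map_neg, LinearMap.neg_apply, neg_neg] at h57
    rw [hδskew (α (α b)) (bracket (α a) x)] at h57
    try simp only [map_neg, LinearMap.neg_apply, neg_neg] at h57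
    rw [hδskew v (bracket (α a) x)] at h57
    try simp only [map_neg, LinearMap.neg_apply, neg_neg] at h57
    have h58 := hδbider (α (α b)) (bracket (α a) x) v
    replace h58 := congrArg (⇑(ρ (α (α u)))) h58
    simp only [map_add, map_sub, map_neg, map_zero] at h58
    simp only [hmult] at h58
    rw [hskew (α (α b)) (bracket (α a) x)] at h58
    try simp only [map_neg, LinearMap.neg_apply, neg_neg] at h58
    have h59 := hδbider (α (α a)) (bracket (α b) x) v
    replace h59 := congrArg (⇑(ρ (α (α u)))) h59
    simp only [map_add, map_sub, map_neg, map_zero] at h59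
    simp only [hmult] at h59
    rw [hskew (α (α a)) (bracket (α b) x)] at h59
    try simp only [map_neg, LinearMap.neg_apply, neg_neg] at h59
    have h60 := hrep2 (α u) (α v) (δ (bracket (α a) (α b)) (α x))
    simp only [hrep1, hδβ] at h60
    simp only [hmult] at h60
    have h61 := hδbider (α (α b)) (α x) (α (α a))
    replace h61 := congrArg (⇑(ρ (bracket (α u) (α v)))) h61
    simp only [map_add, map_sub, map_neg, map_zero] at h61
    rw [hδskew (α x) (α (α a))] at h61
    try simp only [map_neg, LinearMap.neg_apply, neg_neg] at h61
    rw [hδskew (α (α b)) (α (α a))] at h61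
    try simp only [map_neg, LinearMap.neg_apply, neg_neg] at h61
    have h62 := hδbider u (bracket (α a) (α b)) (α x)
    replace h62 := congrArg (⇑(ρ (α (α v)))) h62
    simp only [map_add, map_sub, map_neg, map_zero] at h62
    simp only [hmult] at h62
    rw [hskew u (bracket (α a) (α b))] at h62
    try simp only [map_neg, LinearMap.neg_apply, neg_neg] at h62
    have h63 := hδbider u (bracket (α a) x) (α (α b))
    replace h63 := congrArg (⇑(ρ (α (α v)))) h63
    simp only [map_add, map_sub, map_neg, map_zero] at h63
    simp only [hmult] at h63
    rw [hskew u (bracket (α a) x)] at h63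
    try simp only [map_neg, LinearMap.neg_apply, neg_neg] at h63
    rw [hδskew u (α (α b))] at h63
    try simp only [map_neg, LinearMap.neg_apply, neg_neg] at h63
    have h64 := hrep2 (bracket (α (α a)) (α (α b))) (α u) (δ v (α x))
    simp only [hrep1, hδβ] at h64
    simp only [hmult] at h64
    have h65 := hδbider (α u) (bracket (bracket (α a) (α b)) (α x)) (α v)
    simp only [hmult] at h65
    rw [hskew (α u) (bracket (bracket (α a) (α b)) (α x))] at h65
    try simp only [map_neg, LinearMap.neg_apply, neg_neg] at h65
    have h66 := hδbider (α (α x)) (bracket (bracket (α a) (α b)) u) (α v)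
    simp only [hmult] at h66
    rw [hskew (α (α x)) (bracket (bracket (α a) (α b)) u)] at h66
    try simp only [map_neg, LinearMap.neg_apply, neg_neg] at h66
    rw [hδskew (α (α x)) (α v)] at h66
    try simp only [map_neg, LinearMap.neg_apply, neg_neg] at h66
    have h67 := congrArg (fun w => δ w (α (α v))) (hjac (bracket (α a) (α b)) u (α x))
    simp only [map_add, map_zero, LinearMap.add_apply, LinearMap.zero_apply] at h67
    simp only [hmult] at h67
    rw [hskew (α x) (bracket (α a) (α b))] at h67
    try simp only [map_neg, LinearMap.neg_apply, neg_neg] at h67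
    rw [hskew (α u) (bracket (bracket (α a) (α b)) (α x))] at h67
    try simp only [map_neg, LinearMap.neg_apply, neg_neg] at h67
    rw [hskew (α (α x)) (bracket (bracket (α a) (α b)) u)] at h67
    try simp only [map_neg, LinearMap.neg_apply, neg_neg] at h67
    have h68 := hδbider (bracket (α (α a)) (α (α b))) (bracket u (α x)) (α v)
    simp only [hmult] at h68
    have h69 := hδbider (α v) (bracket u (α x)) (bracket (α (α a)) (α (α b)))
    simp only [hmult] at h69
    rw [hskew (α v) (bracket u (α x))] at h69
    try simp only [map_neg, LinearMap.neg_apply, neg_neg] at h69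
    rw [hδskew (bracket u (α x)) (bracket (α (α a)) (α (α b)))] at h69
    try simp only [map_neg, LinearMap.neg_apply, neg_neg] at h69
    rw [hδskew (α v) (bracket (α (α a)) (α (α b)))] at h69
    try simp only [map_neg, LinearMap.neg_apply, neg_neg] at h69
    have h70 := hδbider (bracket u v) (α (α x)) (bracket (α (α a)) (α (α b)))
    simp only [hmult] at h70
    rw [hδskew (α (α x)) (bracket (α (α a)) (α (α b)))] at h70
    try simp only [map_neg, LinearMap.neg_apply, neg_neg] at h70
    rw [hδskew (bracket u v) (bracket (α (α a)) (α (α b)))] at h70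
    try simp only [map_neg, LinearMap.neg_apply, neg_neg] at h70
    have h71 := congrArg (fun w => δ w (bracket (α (α (α a))) (α (α (α b))))) (hjac u (α x) v)
    simp only [map_add, map_zero, LinearMap.add_apply, LinearMap.zero_apply] at h71
    rw [hskew (α x) v] at h71
    try simp only [map_neg, LinearMap.neg_apply, neg_neg] at h71
    rw [hskew (α u) (bracket v (α x))] at h71
    try simp only [map_neg, LinearMap.neg_apply, neg_neg] at h71
    rw [hskew v u] at h71
    try simp only [map_neg, LinearMap.neg_apply, neg_neg] at h71
    rw [hskew (α (α x)) (bracket u v)] at h71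
    try simp only [map_neg, LinearMap.neg_apply, neg_neg] at h71
    rw [hskew (α v) (bracket u (α x))] at h71
    try simp only [map_neg, LinearMap.neg_apply, neg_neg] at h71
    have h72 := hδbider (α u) (bracket v (α x)) (bracket (α (α a)) (α (α b)))
    simp only [hmult] at h72
    rw [hskew (α u) (bracket v (α x))] at h72
    try simp only [map_neg, LinearMap.neg_apply, neg_neg] at h72
    rw [hδskew (bracket v (α x)) (bracket (α (α a)) (α (α b)))] at h72
    try simp only [map_neg, LinearMap.neg_apply, neg_neg] at h72
    rw [hδskew (α u) (bracket (α (α a)) (α (α b)))] at h72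
    try simp only [map_neg, LinearMap.neg_apply, neg_neg] at h72
    have h73 := hδbider (bracket (bracket (α a) (α b)) v) (α (α x)) (α u)
    simp only [hmult] at h73
    rw [hδskew (α (α x)) (α u)] at h73
    try simp only [map_neg, LinearMap.neg_apply, neg_neg] at h73
    have h74 := congrArg (fun w => δ w (α (α u))) (hjac (bracket (α a) (α b)) (α x) v)
    simp only [map_add, map_zero, LinearMap.add_apply, LinearMap.zero_apply] at h74
    simp only [hmult] at h74
    rw [hskew (α x) v] at h74
    try simp only [map_neg, LinearMap.neg_apply, neg_neg] at h74
    rw [hskew v (bracket (α a) (α b))] at h74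
    try simp only [map_neg, LinearMap.neg_apply, neg_neg] at h74
    rw [hskew (α (α x)) (bracket (bracket (α a) (α b)) v)] at h74
    try simp only [map_neg, LinearMap.neg_apply, neg_neg] at h74
    rw [hskew (α v) (bracket (bracket (α a) (α b)) (α x))] at h74
    try simp only [map_neg, LinearMap.neg_apply, neg_neg] at h74
    have h75 := hδbider (bracket (bracket (α a) (α b)) (α x)) (α v) (α u)
    simp only [hmult] at h75
    rw [hδskew (α v) (α u)] at h75
    try simp only [map_neg, LinearMap.neg_apply, neg_neg] at h75
    have h76 := hδbider (bracket v (α x)) (bracket (α (α a)) (α (α b))) (α u)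
    simp only [hmult] at h76
    rw [hskew (bracket v (α x)) (bracket (α (α a)) (α (α b)))] at h76
    try simp only [map_neg, LinearMap.neg_apply, neg_neg] at h76
    have h77 := hrep2 (α v) (bracket (α (α a)) (α (α b))) (δ u (α x))
    simp only [hrep1, hδβ] at h77
    simp only [hmult] at h77
    rw [hskew (α v) (bracket (α (α a)) (α (α b)))] at h77
    try simp only [map_neg, LinearMap.neg_apply, neg_neg] at h77
    have h78 := congrArg (fun w => δ w (α u)) (hjac (α b) x (α a))
    simp only [map_add, map_zero, LinearMap.add_apply, LinearMap.zero_apply] at h78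
    replace h78 := congrArg (⇑(ρ (α (α v)))) h78
    simp only [map_add, map_sub, map_neg, map_zero] at h78
    rw [hskew x (α a)] at h78
    try simp only [map_neg, LinearMap.neg_apply, neg_neg] at h78
    rw [hskew (α (α b)) (bracket (α a) x)] at h78
    try simp only [map_neg, LinearMap.neg_apply, neg_neg] at h78
    rw [hskew (α x) (bracket (α a) (α b))] at h78
    try simp only [map_neg, LinearMap.neg_apply, neg_neg] at h78
    rw [hskew (α (α a)) (bracket (α b) x)] at h78
    try simp only [map_neg, LinearMap.neg_apply, neg_neg] at h78
    have h79 := hδbider u (bracket (α b) x) (α (α a))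
    replace h79 := congrArg (⇑(ρ (α (α v)))) h79
    simp only [map_add, map_sub, map_neg, map_zero] at h79
    simp only [hmult] at h79
    rw [hskew u (bracket (α b) x)] at h79
    try simp only [map_neg, LinearMap.neg_apply, neg_neg] at h79
    rw [hδskew u (α (α a))] at h79
    try simp only [map_neg, LinearMap.neg_apply, neg_neg] at h79
    have h80 := hδbider (α (α a)) u (bracket (α b) x)
    replace h80 := congrArg (⇑(ρ (α (α v)))) h80
    simp only [map_add, map_sub, map_neg, map_zero] at h80
    simp only [hmult] at h80
    rw [hδskew u (bracket (α b) x)] at h80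
    try simp only [map_neg, LinearMap.neg_apply, neg_neg] at h80
    rw [hδskew (α (α a)) (bracket (α b) x)] at h80
    try simp only [map_neg, LinearMap.neg_apply, neg_neg] at h80
    have h81 := hδbider (α (α b)) u (bracket (α a) x)
    replace h81 := congrArg (⇑(ρ (α (α v)))) h81
    simp only [map_add, map_sub, map_neg, map_zero] at h81
    simp only [hmult] at h81
    rw [hδskew (bracket (α (α b)) u) (bracket (α (α a)) (α x))] at h81
    try simp only [map_neg, LinearMap.neg_apply, neg_neg] at h81
    rw [hδskew u (bracket (α a) x)] at h81
    try simp only [map_neg, LinearMap.neg_apply, neg_neg] at h81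
    rw [hδskew (α (α b)) (bracket (α a) x)] at h81
    try simp only [map_neg, LinearMap.neg_apply, neg_neg] at h81
    have h82 := hδbider (α (α a)) (bracket (α b) x) u
    replace h82 := congrArg (⇑(ρ (α (α v)))) h82
    simp only [map_add, map_sub, map_neg, map_zero] at h82
    simp only [hmult] at h82
    rw [hskew (α (α a)) (bracket (α b) x)] at h82
    try simp only [map_neg, LinearMap.neg_apply, neg_neg] at h82
    have h83 := hδbider u (α x) v
    replace h83 := congrArg (⇑(ρ (bracket (α (α (α a))) (α (α (α b)))))) h83
    simp only [map_add, map_sub, map_neg, map_zero] at h83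
    rw [hδskew (α x) v] at h83
    try simp only [map_neg, LinearMap.neg_apply, neg_neg] at h83
    have h84 := hrep2 (α (α x)) (bracket (α (α a)) (α (α b))) (δ u v)
    simp only [hrep1, hδβ] at h84
    simp only [hmult] at h84
    rw [hskew (α (α x)) (bracket (α (α a)) (α (α b)))] at h84
    try simp only [map_neg, LinearMap.neg_apply, neg_neg] at h84
    have h85 := hδbider (α x) v u
    replace h85 := congrArg (⇑(ρ (bracket (α (α (α a))) (α (α (α b)))))) h85
    simp only [map_add, map_sub, map_neg, map_zero] at h85
    rw [hskew (α x) v] at h85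
    try simp only [map_neg, LinearMap.neg_apply, neg_neg] at h85
    rw [hδskew v u] at h85
    try simp only [map_neg, LinearMap.neg_apply, neg_neg] at h85
    rw [hδskew (α x) u] at h85
    try simp only [map_neg, LinearMap.neg_apply, neg_neg] at h85
    have h86 := hδbider (α (α b)) (bracket (α a) x) u
    replace h86 := congrArg (⇑(ρ (α (α v)))) h86
    simp only [map_add, map_sub, map_neg, map_zero] at h86
    simp only [hmult] at h86
    rw [hskew (α (α b)) (bracket (α a) x)] at h86
    try simp only [map_neg, LinearMap.neg_apply, neg_neg] at h86
    have h87 := hδbider u (bracket (α a) (α b)) v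
    replace h87 := congrArg (⇑(ρ (α (α (α x))))) h87
    simp only [map_add, map_sub, map_neg, map_zero] at h87
    simp only [hmult] at h87
    rw [hskew u (bracket (α a) (α b))] at h87
    try simp only [map_neg, LinearMap.neg_apply, neg_neg] at h87
    have h88 := hδbider (bracket (α a) (α b)) v u
    replace h88 := congrArg (⇑(ρ (α (α (α x))))) h88
    simp only [map_add, map_sub, map_neg, map_zero] at h88
    simp only [hmult] at h88
    rw [hδskew v u] at h88
    try simp only [map_neg, LinearMap.neg_apply, neg_neg] at h88
    have h89 := hδbider v u (bracket (α a) (α b))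
    replace h89 := congrArg (⇑(ρ (α (α (α x))))) h89
    simp only [map_add, map_sub, map_neg, map_zero] at h89
    simp only [hmult] at h89
    rw [hskew v u] at h89
    try simp only [map_neg, LinearMap.neg_apply, neg_neg] at h89
    rw [hδskew (bracket u v) (bracket (α (α a)) (α (α b)))] at h89
    try simp only [map_neg, LinearMap.neg_apply, neg_neg] at h89
    rw [hδskew u (bracket (α a) (α b))] at h89
    try simp only [map_neg, LinearMap.neg_apply, neg_neg] at h89
    rw [hδskew v (bracket (α a) (α b))] at h89
    try simp only [map_neg, LinearMap.neg_apply, neg_neg] at h89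
    linear_combination (norm := module) ((2 : F)) • h0 + ((3 : F)) • h1 + ((-2 : F)) • h2 - h3 + h4 - h5 + h6 + h7 + h8 + h9 + h10 - h11 + h12 - h13 - h14 + h15 - h16 - h17 + h18 + h19 + ((-2 : F)) • h20 + h21 - h22 - h23 + h24 - h25 + h26 + h27 + h28 - h29 - h30 + h31 + h32 - h33 + h34 + h35 + h36 + h37 + h38 - h39 + h40 + h41 - h42 + h43 - h44 + h45 - h46 - h47 + h48 + h49 + h50 + ((-3 : F)) • h51 + h52 + h53 - h54 - h55 + ((-2 : F)) • h56 + ((-2 : F)) • h57 + ((2 : F)) • h58 + ((-2 : F)) • h59 + h60 + ((-2 : F)) • h61 + h62 - h63 + h64 - h65 + h66 - h67 + h68 + h69 + h70 - h71 - h72 + h73 - h74 - h75 + h76 + h77 - h78 + h79 + ((2 : F)) • h80 + ((-2 : F)) • h81 + ((2 : F)) • h82 + ((2 : F)) • h83 + ((-4 : F)) • h84 + ((2 : F)) • h85 + ((-2 : F)) • h86 + ((-2 : F)) • h87 + ((-2 : F)) • h88 + ((2 : F)) • h89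
  have four_ne : (4 : F) ≠ 0 := by
    have h2 := mul_ne_zero hchar hchar
    intro h; apply h2
    calc (2 : F) * 2 = 4 := by norm_num
      _ = 0 := h
  have key2 : ∀ u v x a b : L, ρ (bracket (α u) (α v)) (δ (α (α x)) (bracket (α (α a)) (α (α b))))
      = ρ (bracket (α u) (α v)) (ρ (α (α x)) (δ (α (α a)) (α (α b)))) := by
    intro u v x a b
    have h := key u v x a b
    have h0 : ρ (bracket (α u) (α v)) (δ (bracket (α (α a)) (α (α b))) (α (α x)))
        + ρ (bracket (α u) (α v)) (ρ (α (α x)) (δ (α (α a)) (α (α b)))) = 0 := by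
      rcases smul_eq_zero.mp h with h4 | h4
      · exact absurd h4 four_ne
      · exact h4
    rw [hδskew (α (α x)) (bracket (α (α a)) (α (α b)))]
    simp only [map_neg]
    linear_combination (norm := module) - h0
  -- Step 1: full : δ p (bracket q r) = ρ p (δ q r)
  have full : ∀ p q r : L, δ p (bracket q r) = ρ p (δ q r) := by
    intro p q r
    obtain ⟨x1, hx1⟩ := hαsurj p
    obtain ⟨x, hx⟩ := hαsurj x1
    obtain ⟨a1, ha1⟩ := hαsurj q
    obtain ⟨a, ha⟩ := hαsurj a1
    obtain ⟨b1, hb1⟩ := hαsurj r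
    obtain ⟨b, hb⟩ := hαsurj b1
    subst hx1 hx ha1 ha hb1 hb
    have hW : ∀ z : L, ρ z (δ (α (α x)) (bracket (α (α a)) (α (α b)))
        - ρ (α (α x)) (δ (α (α a)) (α (α b)))) = 0 := by
      have hη : ∀ s : L, ρ (α s) (δ (α (α x)) (bracket (α (α a)) (α (α b)))
          - ρ (α (α x)) (δ (α (α a)) (α (α b)))) = 0 := by
        intro s
        have hs : s ∈ Submodule.span F {w : L | ∃ a b : L, bracket a b = w} := by
          rw [hperfect]; trivial
        have hle : Submodule.span F {w : L | ∃ a b : L, bracket a b = w}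
            ≤ LinearMap.ker ((ρ.comp α).flip (δ (α (α x)) (bracket (α (α a)) (α (α b)))
              - ρ (α (α x)) (δ (α (α a)) (α (α b))))) := by
          apply Submodule.span_le.mpr
          rintro w ⟨p', q', rfl⟩
          simp only [LinearMap.mem_ker, LinearMap.flip_apply, LinearMap.comp_apply, SetLike.mem_coe]
          rw [hmult, map_sub]
          rw [key2 p' q' x a b]
          simp
        have := hle hs
        simpa only [LinearMap.mem_ker, LinearMap.flip_apply, LinearMap.comp_apply] using this
      intro z
      obtain ⟨s, rfl⟩ := hαsurj z
      exact hη s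
    have h0 := hZV _ hW
    exact sub_eq_zero.mp h0
  -- star identity
  have star : ∀ p q u v : L, ρ (α (bracket p q)) (β (δ u v))
      = - ρ (α (bracket u v)) (β (δ p q)) := by
    intro p q u v
    rw [hδβ, hδβ, hmult, hmult]
    rw [← full (bracket (α p) (α q)) (α u) (α v)]
    rw [← full (bracket (α u) (α v)) (α p) (α q)]
    rw [hδskew (bracket (α p) (α q)) (bracket (α u) (α v))]
  -- tensor machinery
  let ψ : TensorProduct F L L →ₗ[F] L := TensorProduct.lift bracket
  let φ : TensorProduct F L L →ₗ[F] V := TensorProduct.lift (δ.compr₂ β.toLinearMap)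
  have hψt : ∀ u v : L, ψ (u ⊗ₜ[F] v) = bracket u v := by
    intro u v; simp [ψ, TensorProduct.lift.tmul]
  have hφt : ∀ u v : L, φ (u ⊗ₜ[F] v) = β (δ u v) := by
    intro u v; simp [φ, TensorProduct.lift.tmul]
  have hψ : Function.Surjective ψ := by
    rw [← LinearMap.range_eq_top]
    rw [eq_top_iff, ← hperfect]
    apply Submodule.span_le.mpr
    rintro w ⟨a, b, rfl⟩
    exact ⟨a ⊗ₜ[F] b, hψt a b⟩
  have hstar2 : ∀ (p q : L) (t : TensorProduct F L L),
      ρ (α (bracket p q)) (φ t) = - ρ (α (ψ t)) (β (δ p q)) := by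
    intro p q t
    induction t using TensorProduct.induction_on with
    | zero => simp
    | tmul u v => rw [hψt, hφt]; exact star p q u v
    | add t1 t2 h1 h2 =>
        simp only [map_add, LinearMap.add_apply, h1, h2, neg_add]
  have hker : LinearMap.ker ψ ≤ LinearMap.ker φ := by
    intro t ht
    rw [LinearMap.mem_ker] at ht ⊢
    apply hZV
    intro z
    have hη : ∀ s : L, ρ (α s) (φ t) = 0 := by
      intro s
      have hs : s ∈ Submodule.span F {w : L | ∃ a b : L, bracket a b = w} := by
        rw [hperfect]; trivial
      have hle : Submodule.span F {w : L | ∃ a b : L, bracket a b = w}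
          ≤ LinearMap.ker ((ρ.comp α).flip (φ t)) := by
        apply Submodule.span_le.mpr
        rintro w ⟨p', q', rfl⟩
        simp only [LinearMap.mem_ker, LinearMap.flip_apply, LinearMap.comp_apply, SetLike.mem_coe]
        rw [hstar2 p' q' t, ht]
        simp
      have := hle hs
      simpa only [LinearMap.mem_ker, LinearMap.flip_apply, LinearMap.comp_apply] using this
    obtain ⟨s, rfl⟩ := hαsurj z
    exact hη s
  -- build γ
  let e := ψ.quotKerEquivOfSurjective hψ
  let γ : L →ₗ[F] V := (Submodule.liftQ (LinearMap.ker ψ) φ hker).comp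
    (e.symm : L ≃ₗ[F] _).toLinearMap
  have hγψ : ∀ t : TensorProduct F L L, γ (ψ t) = φ t := by
    intro t
    have he : e (Submodule.Quotient.mk t) = ψ t := rfl
    have hesymm : (e.symm : L ≃ₗ[F] _) (ψ t) = Submodule.Quotient.mk t := by
      rw [LinearEquiv.symm_apply_eq, he]
    simp only [γ, LinearMap.comp_apply, LinearEquiv.coe_toLinearMap]
    rw [hesymm, Submodule.liftQ_apply]
  have hγbr : ∀ u v : L, γ (bracket u v) = β (δ u v) := by
    intro u v
    rw [← hψt u v, hγψ, hφt]
  refine ⟨γ, ?_, ?_, ?_⟩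
  · intro x y
    have hext : γ.comp (bracket x) = (ρ (α x)).comp γ := by
      apply LinearMap.ext_on hperfect
      rintro w ⟨a, b, rfl⟩
      simp only [LinearMap.comp_apply]
      rw [hγbr, hγbr, full x a b, hrep1]
    exact LinearMap.congr_fun hext y
  · intro x
    have hext : (β.toLinearMap).comp γ = γ.comp α := by
      apply LinearMap.ext_on hperfect
      rintro w ⟨a, b, rfl⟩
      simp only [LinearMap.comp_apply, LinearEquiv.coe_coe]
      rw [hγbr, hmult, hγbr, ← hδβ]
    exact LinearMap.congr_fun hext x
  · intro x y
    rw [hγbr, LinearEquiv.symm_apply_apply]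
end

section
/- Let (L, α) be a multiplicative Hom-Lie algebra over F that is perfect and centerless (Z(L) = {0}) with α bijective, and let k be a natural number. Then every skew-symmetric biderivation δ : L × L → L for the α^k-adjoint module (L, ad_k, α) is of the form δ(x, y) = α⁻¹(γ([x,y])) for some γ in the centroid Cent(L, ad_k), i.e. some linear γ : L → L with γ([x,y]) = [α^{k+1}(x), γ(y)] for all x, y ∈ L and γ∘α = α∘γ. -/
namespace HomLieBider

structure Setup (F L : Type*) [Field F] [AddCommGroup L] [Module F L] where
  bracket : L →ₗ[F] L →ₗ[F] L
  α : L ≃ₗ[F] L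
  k : ℕ
  δ : L →ₗ[F] L →ₗ[F] L
  hchar : (2 : F) ≠ 0
  hskew : ∀ x y : L, bracket x y = - bracket y x
  hjac : ∀ x y z : L,
      bracket (α x) (bracket y z) + bracket (α y) (bracket z x)
        + bracket (α z) (bracket x y) = 0
  hmult : ∀ x y : L, α (bracket x y) = bracket (α x) (α y)
  hδskew : ∀ x y : L, δ x y = - δ y x
  hδα : ∀ x y : L, α (δ x y) = δ (α x) (α y)
  hδbider : ∀ x y z : L,
      δ (bracket x y) (α z)
        = bracket ((α ^ (k + 1)) x) (δ y z) - bracket ((α ^ (k + 1)) y) (δ x z)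
  hperfect : Submodule.span F {w : L | ∃ a b : L, bracket a b = w} = ⊤
  hcenterless : ∀ z : L, (∀ x : L, bracket z x = 0) → z = 0

namespace Setup

variable {F L : Type*} [Field F] [AddCommGroup L] [Module F L] (S : Setup F L)

theorem hpow_succ (n : ℕ) (z : L) : (S.α ^ (n+1)) z = (S.α ^ n) (S.α z) := by
  rw [pow_succ]; rfl

theorem hpow_succ' (n : ℕ) (z : L) : (S.α ^ (n+1)) z = S.α ((S.α ^ n) z) := by
  rw [pow_succ']; rfl

theorem pow_bracket (n : ℕ) (x y : L) :
    (S.α ^ n) (S.bracket x y) = S.bracket ((S.α ^ n) x) ((S.α ^ n) y) := by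
  induction n with
  | zero => simp
  | succ n ih => rw [S.hpow_succ', ih, S.hmult, S.hpow_succ', S.hpow_succ']

theorem pow_δ (n : ℕ) (x y : L) :
    (S.α ^ n) (S.δ x y) = S.δ ((S.α ^ n) x) ((S.α ^ n) y) := by
  induction n with
  | zero => simp
  | succ n ih => rw [S.hpow_succ', ih, S.hδα, S.hpow_succ', S.hpow_succ']

theorem J1 (a b c : L) :
    S.bracket (S.α a) (S.bracket b c)
      = S.bracket (S.α b) (S.bracket a c) - S.bracket (S.α c) (S.bracket a b) := by
  have h := S.hjac a b c
  rw [S.hskew c a, map_neg] at h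
  linear_combination (norm := abel) h

/-- `P a b c d = [α^{k+2} a, [α^{k+1} b, δ(c,d)]]` -/
def P (a b c d : L) : L :=
  S.bracket ((S.α ^ (S.k+2)) a) (S.bracket ((S.α ^ (S.k+1)) b) (S.δ c d))

/-- `Q a b c d = [α(δ(a,b)), α^{k+1}([c,d])]` -/
def Q (a b c d : L) : L :=
  S.bracket (S.α (S.δ a b)) ((S.α ^ (S.k+1)) (S.bracket c d))

theorem pskew (a b c d : L) : S.P a b c d = - S.P a b d c := by
  simp only [P, S.hδskew c d, map_neg]

theorem qskew1 (a b c d : L) : S.Q a b c d = - S.Q b a c d := by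
  simp only [Q, S.hδskew a b, map_neg, LinearMap.neg_apply]

theorem qskew2 (a b c d : L) : S.Q a b c d = - S.Q a b d c := by
  simp only [Q, S.hskew c d, map_neg]

theorem R1 (a b c d : L) : S.P a b c d = S.P b a c d - S.Q c d a b := by
  have h := S.hjac ((S.α ^ (S.k+1)) a) ((S.α ^ (S.k+1)) b) (S.δ c d)
  rw [S.hskew (S.δ c d) ((S.α ^ (S.k+1)) a), map_neg,
    ← S.pow_bracket (S.k+1) a b,
    ← S.hpow_succ' (S.k+1) a, ← S.hpow_succ' (S.k+1) b] at h
  simp only [P, Q]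
  linear_combination (norm := abel) h

/-- inner expansion: `δ(α b, [u,v]) = [α^{k+1} v, δ(u,b)] - [α^{k+1} u, δ(v,b)]` -/
theorem inner_exp (b u v : L) :
    S.δ (S.α b) (S.bracket u v)
      = S.bracket ((S.α ^ (S.k+1)) v) (S.δ u b)
        - S.bracket ((S.α ^ (S.k+1)) u) (S.δ v b) := by
  rw [S.hδskew (S.α b) (S.bracket u v), S.hδbider u v b]
  abel

theorem hrel (x y u v : L) :
    S.Q u y x v + S.Q x v u y = S.Q v y x u + S.Q x u v y := by
  have a1 := S.hδbider (S.α x) (S.α y) (S.bracket u v)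
  rw [← S.hpow_succ (S.k+1) x, ← S.hpow_succ (S.k+1) y,
    S.inner_exp y u v, S.inner_exp x u v] at a1
  have e1 : S.δ (S.bracket (S.α x) (S.α y)) (S.α (S.bracket u v))
      = S.P x v u y - S.P x u v y - S.P y v u x + S.P y u v x := by
    rw [a1]; simp only [P, map_sub]; abel
  have b1 : S.δ (S.bracket (S.α x) (S.α y)) (S.α (S.bracket u v))
      = - S.δ (S.bracket (S.α u) (S.α v)) (S.α (S.bracket x y)) := by
    rw [S.hδskew, S.hmult u v, ← S.hmult x y]
  have b2 := S.hδbider (S.α u) (S.α v) (S.bracket x y)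
  rw [← S.hpow_succ (S.k+1) u, ← S.hpow_succ (S.k+1) v,
    S.inner_exp v x y, S.inner_exp u x y] at b2
  have e2 : S.δ (S.bracket (S.α x) (S.α y)) (S.α (S.bracket u v))
      = S.P u x y v - S.P u y x v - S.P v x y u + S.P v y x u := by
    rw [b1, b2]; simp only [P, map_sub]; abel
  have e3 := e1.symm.trans e2
  have r1 := S.R1 x v u y
  have r2 := S.R1 x u v y
  have r3 := S.R1 y v u x
  have r4 := S.R1 y u v x
  have ps1 := S.pskew u x y v
  have ps2 := S.pskew u y x v
  have ps3 := S.pskew v x y u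
  have ps4 := S.pskew v y x u
  have q1 : S.Q u x y v = S.Q x u v y := by
    rw [S.qskew1 u x y v, S.qskew2 x u y v, neg_neg]
  have q2 : S.Q v x y u = S.Q x v u y := by
    rw [S.qskew1 v x y u, S.qskew2 x v y u, neg_neg]
  linear_combination (norm := abel)
    -e3 + r1 - r2 - r3 + r4 - ps1 + ps2 + ps3 - ps4 + q1 - q2

theorem key (a b c d : L) : S.Q a b c d = - S.Q c d a b := by
  have sswap : ∀ a b c d : L, S.Q a b c d + S.Q c d a b = S.Q d b c a + S.Q c a d b :=
    fun a b c d => S.hrel c b a d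
  have sneg : ∀ a b c d : L,
      S.Q b a c d + S.Q c d b a = -(S.Q a b c d + S.Q c d a b) := by
    intro a b c d
    rw [S.qskew1 b a c d, S.qskew2 c d b a]
    abel
  have chase : S.Q a b c d + S.Q c d a b = -(S.Q a b c d + S.Q c d a b) := by
    calc S.Q a b c d + S.Q c d a b
        = S.Q d b c a + S.Q c a d b := sswap a b c d
      _ = -(S.Q b d c a + S.Q c a b d) := sneg b d c a
      _ = -(S.Q a d c b + S.Q c b a d) := by rw [sswap b d c a]
      _ = -(-(S.Q d a c b + S.Q c b d a)) := by rw [sneg d a c b]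
      _ = S.Q d a c b + S.Q c b d a := neg_neg _
      _ = S.Q b a c d + S.Q c d b a := sswap d a c b
      _ = -(S.Q a b c d + S.Q c d a b) := sneg a b c d
  have h2 : (2 : F) • (S.Q a b c d + S.Q c d a b) = 0 := by
    rw [two_smul]
    linear_combination (norm := abel) chase
  have hT0 : S.Q a b c d + S.Q c d a b = 0 :=
    (smul_eq_zero.mp h2).resolve_left S.hchar
  linear_combination (norm := abel) hT0


/-- `Th u v w = [α^{k+1}u, δ(v,w)] + [α^{k+1}v, δ(w,u)] + [α^{k+1}w, δ(u,v)]` -/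
def Th (u v w : L) : L :=
  S.bracket ((S.α ^ (S.k+1)) u) (S.δ v w) + S.bracket ((S.α ^ (S.k+1)) v) (S.δ w u)
    + S.bracket ((S.α ^ (S.k+1)) w) (S.δ u v)

theorem thcyc (u v w : L) : S.Th u v w = S.Th v w u := by
  simp only [Th]; abel

theorem thform (s t u : L) :
    S.Th s t u = S.δ (S.bracket s t) (S.α u) + S.bracket ((S.α ^ (S.k+1)) u) (S.δ s t) := by
  simp only [Th]
  rw [S.hδbider s t u, S.hδskew s u]
  simp only [map_neg]
  abel

theorem tau (s t u v w : L) :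
    S.bracket (S.bracket ((S.α^(S.k+2)) u) (S.α (S.δ v w))) ((S.α^(S.k+2)) (S.bracket s t))
      = - S.bracket (S.α (S.α (S.δ s t))) ((S.α^(S.k+1)) (S.bracket (S.α u) (S.bracket v w)))
        + S.bracket ((S.α^(S.k+2)) (S.bracket v w)) (S.α (S.Th s t u)) := by
  have c1 : S.bracket ((S.α^(S.k+1)) (S.bracket s t)) (S.α (S.δ v w))
      = S.bracket (S.α (S.δ s t)) ((S.α^(S.k+1)) (S.bracket v w)) := by
    rw [S.hskew]
    have h := S.key v w s t
    simp only [Q] at h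
    rw [h, neg_neg]
  have c2 : S.bracket (S.α (S.α (S.δ v w)))
        (S.bracket ((S.α^(S.k+1)) (S.bracket s t)) ((S.α^(S.k+2)) u))
      = - S.bracket (S.α (S.δ (S.bracket s t) (S.α u))) ((S.α^(S.k+2)) (S.bracket v w)) := by
    rw [S.hpow_succ (S.k+1) u, ← S.pow_bracket (S.k+1) (S.bracket s t) (S.α u), S.hδα v w]
    have h := S.key (S.α v) (S.α w) (S.bracket s t) (S.α u)
    simp only [Q] at h
    rw [h, ← S.hmult v w, ← S.hpow_succ (S.k+1) (S.bracket v w)]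
  rw [S.hskew, S.hpow_succ' (S.k+1) (S.bracket s t),
    S.J1 ((S.α^(S.k+1)) (S.bracket s t)) ((S.α^(S.k+2)) u) (S.α (S.δ v w)),
    c1, c2,
    S.J1 ((S.α^(S.k+2)) u) (S.α (S.δ s t)) ((S.α^(S.k+1)) (S.bracket v w))]
  have d1 : S.bracket ((S.α^(S.k+2)) u) ((S.α^(S.k+1)) (S.bracket v w))
      = (S.α^(S.k+1)) (S.bracket (S.α u) (S.bracket v w)) := by
    rw [S.pow_bracket (S.k+1) (S.α u) (S.bracket v w), ← S.hpow_succ (S.k+1) u]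
  have d2 : S.bracket ((S.α^(S.k+2)) u) (S.α (S.δ s t))
      = S.α (S.bracket ((S.α^(S.k+1)) u) (S.δ s t)) := by
    rw [S.hmult, ← S.hpow_succ' (S.k+1) u]
  have d3 : S.α ((S.α^(S.k+1)) (S.bracket v w)) = (S.α^(S.k+2)) (S.bracket v w) :=
    (S.hpow_succ' (S.k+1) (S.bracket v w)).symm
  rw [d1, d2, d3, S.thform s t u, map_add, map_add]
  have d4 := S.hskew (S.α (S.δ (S.bracket s t) (S.α u))) ((S.α^(S.k+2)) (S.bracket v w))
  linear_combination (norm := abel) -d4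

theorem t1l (s t u v w : L) :
    S.bracket (S.α (S.δ (S.bracket v w) (S.α u))) ((S.α^(S.k+2)) (S.bracket s t))
      = S.bracket (S.α (S.α (S.δ s t))) ((S.α^(S.k+1)) (S.bracket (S.α u) (S.bracket v w))) := by
  rw [S.hpow_succ (S.k+1) (S.bracket s t), S.hmult s t]
  have h := S.key (S.bracket v w) (S.α u) (S.α s) (S.α t)
  simp only [Q] at h
  rw [h, ← S.hδα s t, S.hskew (S.bracket v w) (S.α u)]
  simp only [map_neg]
  rw [neg_neg]

theorem rel2 (s t u v w : L) :
    S.bracket (S.α (S.Th u v w)) ((S.α^(S.k+2)) (S.bracket s t))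
      = S.bracket ((S.α^(S.k+2)) (S.bracket v w)) (S.α (S.Th s t u)) := by
  have d2' : S.α (S.bracket ((S.α^(S.k+1)) u) (S.δ v w))
      = S.bracket ((S.α^(S.k+2)) u) (S.α (S.δ v w)) := by
    rw [S.hmult, ← S.hpow_succ' (S.k+1) u]
  rw [S.thcyc u v w, S.thform v w u, map_add, map_add, LinearMap.add_apply,
    d2', S.tau s t u v w, S.t1l s t u v w]
  abel

theorem xzero (u v w s t : L) :
    S.bracket (S.α (S.Th u v w)) ((S.α^(S.k+2)) (S.bracket s t)) = 0 := by
  have d2a : S.α (S.bracket ((S.α^(S.k+1)) u) (S.δ v w))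
      = S.bracket ((S.α^(S.k+2)) u) (S.α (S.δ v w)) := by
    rw [S.hmult, ← S.hpow_succ' (S.k+1) u]
  have d2b : S.α (S.bracket ((S.α^(S.k+1)) v) (S.δ w u))
      = S.bracket ((S.α^(S.k+2)) v) (S.α (S.δ w u)) := by
    rw [S.hmult, ← S.hpow_succ' (S.k+1) v]
  have d2c : S.α (S.bracket ((S.α^(S.k+1)) w) (S.δ u v))
      = S.bracket ((S.α^(S.k+2)) w) (S.α (S.δ u v)) := by
    rw [S.hmult, ← S.hpow_succ' (S.k+1) w]
  have hX : S.bracket (S.α (S.Th u v w)) ((S.α^(S.k+2)) (S.bracket s t))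
      = S.bracket (S.bracket ((S.α^(S.k+2)) u) (S.α (S.δ v w))) ((S.α^(S.k+2)) (S.bracket s t))
        + S.bracket (S.bracket ((S.α^(S.k+2)) v) (S.α (S.δ w u))) ((S.α^(S.k+2)) (S.bracket s t))
        + S.bracket (S.bracket ((S.α^(S.k+2)) w) (S.α (S.δ u v))) ((S.α^(S.k+2)) (S.bracket s t)) := by
    simp only [Th, map_add, LinearMap.add_apply, d2a, d2b, d2c]
  rw [S.tau s t u v w, S.tau s t v w u, S.tau s t w u v] at hX
  have jz : S.bracket (S.α (S.α (S.δ s t))) ((S.α^(S.k+1)) (S.bracket (S.α u) (S.bracket v w)))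
      + S.bracket (S.α (S.α (S.δ s t))) ((S.α^(S.k+1)) (S.bracket (S.α v) (S.bracket w u)))
      + S.bracket (S.α (S.α (S.δ s t))) ((S.α^(S.k+1)) (S.bracket (S.α w) (S.bracket u v))) = 0 := by
    simp only [← map_add]
    rw [S.hjac u v w]
    simp
  have e1 := S.rel2 s t u v w
  have e2 := S.rel2 s t v w u
  rw [← S.thcyc u v w] at e2
  have tc2 : S.Th u v w = S.Th w u v := (S.thcyc u v w).trans (S.thcyc v w u)
  have e3 := S.rel2 s t w u v
  rw [← tc2] at e3
  have h2 : (2:F) • (S.bracket (S.α (S.Th u v w)) ((S.α^(S.k+2)) (S.bracket s t))) = 0 := by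
    rw [two_smul]
    linear_combination (norm := abel) e1 + e2 + e3 + jz - hX
  exact (smul_eq_zero.mp h2).resolve_left S.hchar

theorem theta (u v w : L) : S.Th u v w = 0 := by
  have hz : ∀ x : L, S.bracket (S.α (S.Th u v w)) x = 0 := by
    have f0 : (S.bracket (S.α (S.Th u v w))) ∘ₗ ((S.α ^ (S.k+2)) : L ≃ₗ[F] L).toLinearMap
        = (0 : L →ₗ[F] L) := by
      apply LinearMap.ext_on S.hperfect
      rintro _ ⟨a, b, rfl⟩
      simpa using S.xzero u v w a b
    intro x
    have h1 := LinearMap.ext_iff.mp f0 ((S.α ^ (S.k+2)).symm x)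
    simpa using h1
  have h0 : S.α (S.Th u v w) = 0 := S.hcenterless _ hz
  exact (LinearEquiv.map_eq_zero_iff S.α).mp h0

theorem c2a (u v w : L) :
    S.δ (S.bracket u v) (S.α w) = - S.bracket ((S.α^(S.k+1)) w) (S.δ u v) := by
  have h := S.theta u v w
  simp only [Th] at h
  rw [S.hδbider u v w, S.hδskew u w]
  simp only [map_neg]
  linear_combination (norm := abel) h

end Setup
end HomLieBider

open TensorProduct in
/-- Theorem 3.7, first part: on a perfect centerless Hom-Lie
algebra with `α` bijective, every skew-symmetric biderivation for the
`α^k`-adjoint module is of the form `δ(x,y) = α⁻¹(γ([x,y]))` with `γ` in the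
centroid `Cent(L, ad_k)`. -/
theorem homLie_adjoint_biderivation_from_centroid
    {F L : Type*} [Field F] [AddCommGroup L] [Module F L]
    (hchar : (2 : F) ≠ 0)
    (bracket : L →ₗ[F] L →ₗ[F] L) (α : L ≃ₗ[F] L)
    (hskew : ∀ x y : L, bracket x y = - bracket y x)
    (hjac : ∀ x y z : L,
      bracket (α x) (bracket y z) + bracket (α y) (bracket z x)
        + bracket (α z) (bracket x y) = 0)
    (hmult : ∀ x y : L, α (bracket x y) = bracket (α x) (α y))
    (hperfect : Submodule.span F {w : L | ∃ a b : L, bracket a b = w} = ⊤)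
    (hcenterless : ∀ z : L, (∀ x : L, bracket z x = 0) → z = 0)
    (k : ℕ)
    (δ : L →ₗ[F] L →ₗ[F] L)
    (hδskew : ∀ x y : L, δ x y = - δ y x)
    (hδα : ∀ x y : L, α (δ x y) = δ (α x) (α y))
    (hδbider : ∀ x y z : L,
      δ (bracket x y) (α z)
        = bracket ((α ^ (k + 1)) x) (δ y z) - bracket ((α ^ (k + 1)) y) (δ x z)) :
    ∃ γ : L →ₗ[F] L,
      (∀ x y : L, γ (bracket x y) = bracket ((α ^ (k + 1)) x) (γ y)) ∧
      (∀ x : L, γ (α x) = α (γ x)) ∧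
      (∀ x y : L, δ x y = α.symm (γ (bracket x y))) := by
  have c2a : ∀ u v w : L, δ (bracket u v) (α w) = - bracket ((α ^ (k+1)) w) (δ u v) :=
    HomLieBider.Setup.c2a
      ⟨bracket, α, k, δ, hchar, hskew, hjac, hmult, hδskew, hδα, hδbider, hperfect, hcenterless⟩
  have hps : ∀ (n : ℕ) (z : L), (α ^ (n+1)) z = (α ^ n) (α z) :=
    HomLieBider.Setup.hpow_succ
      ⟨bracket, α, k, δ, hchar, hskew, hjac, hmult, hδskew, hδα, hδbider, hperfect, hcenterless⟩
  have hps' : ∀ (n : ℕ) (z : L), (α ^ (n+1)) z = α ((α ^ n) z) :=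
    HomLieBider.Setup.hpow_succ'
      ⟨bracket, α, k, δ, hchar, hskew, hjac, hmult, hδskew, hδα, hδbider, hperfect, hcenterless⟩
  have hcomm : ∀ (n : ℕ) (z : L), α ((α ^ n) z) = (α ^ n) (α z) := fun n z =>
    (hps' n z).symm.trans (hps n z)
  have hβr : LinearMap.range (TensorProduct.lift bracket) = ⊤ := by
    rw [← top_le_iff, ← hperfect]
    refine Submodule.span_le.mpr ?_
    rintro w ⟨a, b, rfl⟩
    exact ⟨a ⊗ₜ b, rfl⟩
  obtain ⟨σ, hσ⟩ := (TensorProduct.lift bracket).exists_rightInverse_of_surjective hβr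
  have hker : ∀ t : TensorProduct F L L,
      TensorProduct.lift bracket t = 0 → TensorProduct.lift δ t = 0 := by
    intro t ht
    have hw : ∀ w : L, bracket ((α ^ (k+1)) w) (TensorProduct.lift δ t) = 0 := by
      intro w
      have hmaps : (bracket ((α ^ (k+1)) w)) ∘ₗ TensorProduct.lift δ
          = - ((δ.flip (α w)) ∘ₗ TensorProduct.lift bracket) := by
        apply TensorProduct.ext'
        intro a b
        simp only [LinearMap.comp_apply, LinearMap.neg_apply, TensorProduct.lift.tmul,
          LinearMap.flip_apply]
        rw [c2a a b w, neg_neg]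
      have h2 := LinearMap.ext_iff.mp hmaps t
      simp only [LinearMap.comp_apply, LinearMap.neg_apply, LinearMap.flip_apply] at h2
      rw [h2, ht]
      simp
    have hall : ∀ x : L, bracket (TensorProduct.lift δ t) x = 0 := by
      intro x
      have h1 := hw ((α ^ (k+1)).symm x)
      rw [LinearEquiv.apply_symm_apply] at h1
      rw [hskew, h1, neg_zero]
    exact hcenterless _ hall
  have hγβ : ∀ t : TensorProduct F L L,
      ((α.toLinearMap ∘ₗ TensorProduct.lift δ) ∘ₗ σ) (TensorProduct.lift bracket t)
        = α (TensorProduct.lift δ t) := by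
    intro t
    have h0 : TensorProduct.lift bracket (σ (TensorProduct.lift bracket t) - t) = 0 := by
      rw [map_sub]
      have h1 := LinearMap.ext_iff.mp hσ (TensorProduct.lift bracket t)
      simp only [LinearMap.comp_apply, LinearMap.id_apply] at h1
      rw [h1, sub_self]
    have h1 := hker _ h0
    rw [map_sub, sub_eq_zero] at h1
    simp only [LinearMap.comp_apply, LinearEquiv.coe_coe]
    rw [h1]
  have hγbr : ∀ x y : L,
      ((α.toLinearMap ∘ₗ TensorProduct.lift δ) ∘ₗ σ) (bracket x y) = α (δ x y) := by
    intro x y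
    have h := hγβ (x ⊗ₜ y)
    simpa using h
  have hγbr2 : ∀ x y : L, TensorProduct.lift δ (σ (bracket x y)) = δ x y := fun x y =>
    α.injective (by simpa using hγβ (x ⊗ₜ y))
  refine ⟨(α.toLinearMap ∘ₗ TensorProduct.lift δ) ∘ₗ σ, ?_, ?_, ?_⟩
  · intro x y0
    have key2 : ((α.toLinearMap ∘ₗ TensorProduct.lift δ) ∘ₗ σ) ∘ₗ (bracket x)
        = (bracket ((α ^ (k+1)) x)) ∘ₗ ((α.toLinearMap ∘ₗ TensorProduct.lift δ) ∘ₗ σ) := by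
      apply LinearMap.ext_on hperfect
      rintro _ ⟨u, v, rfl⟩
      simp only [LinearMap.comp_apply, LinearEquiv.coe_coe]
      rw [hγbr2 x (bracket u v), hγbr2 u v]
      have hx1 : δ x (bracket u v) = bracket ((α ^ (k+1)) (α.symm x)) (δ u v) := by
        have h2 := c2a u v (α.symm x)
        rw [α.apply_symm_apply] at h2
        rw [hδskew x (bracket u v), h2, neg_neg]
      rw [hx1, hmult, hcomm (k+1) (α.symm x), α.apply_symm_apply]
    have h := LinearMap.ext_iff.mp key2 y0
    simpa using h
  · intro x
    have key3 : ((α.toLinearMap ∘ₗ TensorProduct.lift δ) ∘ₗ σ) ∘ₗ α.toLinearMap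
        = α.toLinearMap ∘ₗ ((α.toLinearMap ∘ₗ TensorProduct.lift δ) ∘ₗ σ) := by
      apply LinearMap.ext_on hperfect
      rintro _ ⟨a, b, rfl⟩
      simp only [LinearMap.comp_apply, LinearEquiv.coe_coe]
      rw [hmult a b, hγbr2 (α a) (α b), hγbr2 a b, ← hδα]
    have h := LinearMap.ext_iff.mp key3 x
    simpa using h
  · intro x y
    rw [hγbr x y, α.symm_apply_apply]
end

section
/- Let F be an algebraically closed field with char F ≠ 2, and let (L, α) be a finite-dimensional simple multiplicative Hom-Lie algebra over F with α bijective. Then for every natural number k, every skew-symmetric biderivation δ : L × L → L for the α^k-adjoint module (L, ad_k, α) is of the form δ(x, y) = λ·α^k([x,y]) for some λ ∈ F. -/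
open scoped TensorProduct

/-- Theorem 3.7, second part: on a finite-dimensional simple
Hom-Lie algebra with `α` bijective over an algebraically closed field, every
skew-symmetric biderivation for the `α^k`-adjoint module has the form
`δ(x,y) = λ • α^k([x,y])`. -/
theorem homLie_simple_adjoint_biderivation_scalar
    {F L : Type*} [Field F] [IsAlgClosed F] [AddCommGroup L] [Module F L]
    [FiniteDimensional F L]
    (hchar : (2 : F) ≠ 0)
    (bracket : L →ₗ[F] L →ₗ[F] L) (α : L ≃ₗ[F] L)
    (hskew : ∀ x y : L, bracket x y = - bracket y x)
    (hjac : ∀ x y z : L,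
      bracket (α x) (bracket y z) + bracket (α y) (bracket z x)
        + bracket (α z) (bracket x y) = 0)
    (hmult : ∀ x y : L, α (bracket x y) = bracket (α x) (α y))
    (hsimple : ∀ I : Submodule F L,
      (∀ x ∈ I, ∀ y : L, bracket x y ∈ I) → (∀ x ∈ I, α x ∈ I) →
      I = ⊥ ∨ I = ⊤)
    (hnonabelian : ∃ x y : L, bracket x y ≠ 0)
    (k : ℕ)
    (δ : L →ₗ[F] L →ₗ[F] L)
    (hδskew : ∀ x y : L, δ x y = - δ y x)
    (hδα : ∀ x y : L, α (δ x y) = δ (α x) (α y))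
    (hδbider : ∀ x y z : L,
      δ (bracket x y) (α z)
        = bracket ((α ^ (k + 1)) x) (δ y z) - bracket ((α ^ (k + 1)) y) (δ x z)) :
    ∃ lam : F, ∀ x y : L, δ x y = lam • (α ^ k) (bracket x y) := by
  classical
  obtain ⟨x₀, y₀, hxy₀⟩ := hnonabelian
  haveI : Nontrivial L := ⟨⟨bracket x₀ y₀, 0, hxy₀⟩⟩
  -- zero-from-X trick helper: from `X = -X` conclude `X = 0`
  have half : ∀ X : L, X = -X → X = 0 := by
    intro X hX
    have h2 : (2 : F) • X = 0 := by
      rw [two_smul]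
      nth_rewrite 2 [hX]
      abel
    rcases smul_eq_zero.mp h2 with h | h
    · exact absurd h hchar
    · exact h
  -- power manipulation helpers
  have hps : ∀ (n : ℕ) (y : L), (α ^ (n+1)) y = α ((α ^ n) y) := by
    intro n y; rw [pow_succ']; rfl
  have hps2 : ∀ (n : ℕ) (y : L), (α ^ (n+1)) y = (α ^ n) (α y) := by
    intro n y; rw [pow_succ]; rfl
  have hss : ∀ (n : ℕ) (y : L), (α.symm ^ (n+1)) y = α.symm ((α.symm ^ n) y) := by
    intro n y; rw [pow_succ']; rfl
  have hss2 : ∀ (n : ℕ) (y : L), (α.symm ^ (n+1)) y = (α.symm ^ n) (α.symm y) := by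
    intro n y; rw [pow_succ]; rfl
  have hcan1 : ∀ (n : ℕ) (y : L), (α ^ n) ((α.symm ^ n) y) = y := by
    intro n; induction n with
    | zero => intro y; rfl
    | succ n ih => intro y; rw [hss n y, hps2 n, α.apply_symm_apply, ih]
  have hcan2 : ∀ (n : ℕ) (y : L), (α.symm ^ n) ((α ^ n) y) = y := by
    intro n; induction n with
    | zero => intro y; rfl
    | succ n ih => intro y; rw [hps n y, hss2 n, α.symm_apply_apply, ih]
  have hcomm : ∀ (n : ℕ) (y : L), α ((α.symm ^ n) y) = (α.symm ^ n) (α y) := by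
    intro n; induction n with
    | zero => intro y; rfl
    | succ n ih => intro y; rw [hss2 n, hss2 n, ih, α.apply_symm_apply, α.symm_apply_apply]
  have hmultS : ∀ x y : L, α.symm (bracket x y) = bracket (α.symm x) (α.symm y) := by
    intro x y
    apply α.injective
    rw [α.apply_symm_apply, hmult, α.apply_symm_apply, α.apply_symm_apply]
  have hmultSn : ∀ (n : ℕ) (x y : L),
      (α.symm ^ n) (bracket x y) = bracket ((α.symm ^ n) x) ((α.symm ^ n) y) := by
    intro n; induction n with
    | zero => intro x y; rfl
    | succ n ih => intro x y; rw [hss2 n, hss2 n, hss2 n, hmultS, ih]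
  -- the shifted biderivation `dm = α^{-k} ∘ δ`, reducing to the case k = 0
  obtain ⟨dm, hdm⟩ : ∃ dm : L →ₗ[F] L →ₗ[F] L,
      ∀ x y : L, dm x y = (α.symm ^ k) (δ x y) :=
    ⟨δ.compr₂ (α.symm ^ k : L ≃ₗ[F] L).toLinearMap, fun x y => by
      simp [LinearMap.compr₂_apply]⟩
  have hd_skew : ∀ x y : L, dm x y = - dm y x := by
    intro x y; rw [hdm, hdm, hδskew x y, map_neg]
  have hd_alpha : ∀ x y : L, α (dm x y) = dm (α x) (α y) := by
    intro x y; rw [hdm, hdm, hcomm k, hδα]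
  have hd_bider : ∀ x y z : L,
      dm (bracket x y) (α z) = bracket (α x) (dm y z) - bracket (α y) (dm x z) := by
    intro x y z
    have hAk1 : ∀ w : L, (α.symm ^ k) ((α ^ (k+1)) w) = α w := by
      intro w; rw [hps2 k w, hcan2 k]
    rw [hdm, hδbider x y z, map_sub, hmultSn k, hmultSn k, hAk1, hAk1, hdm, hdm]
  -- sub-lemma (S'): expansion when the first argument is α p
  have hS' : ∀ p u v : L,
      dm (α p) (bracket u v) = bracket (α u) (dm p v) - bracket (α v) (dm p u) := by
    intro p u v
    rw [hd_skew (α p) (bracket u v), hd_bider u v p, hd_skew v p, hd_skew u p,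
      map_neg, map_neg]
    abel
  -- Hom-Jacobi rearrangement
  have hJ' : ∀ p q w : L,
      bracket (α (α p)) (bracket (α q) w)
        = bracket (α (α q)) (bracket (α p) w)
          - bracket (α w) (bracket (α p) (α q)) := by
    intro p q w
    have h := hjac (α p) (α q) w
    rw [hskew w (α p), map_neg] at h
    rw [← sub_eq_zero, ← h]
    abel
  -- the key symmetric identity (II)
  have hII : ∀ a u b v : L,
      bracket (dm a u) (bracket b v) + bracket (dm b v) (bracket a u)
        = bracket (dm a v) (bracket b u) + bracket (dm b u) (bracket a v) := by
    intro a u b v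
    have e1 : dm (bracket (α a) (α b)) (α (bracket u v))
        = bracket (α (α a)) (bracket (α u) (dm b v) - bracket (α v) (dm b u))
          - bracket (α (α b)) (bracket (α u) (dm a v) - bracket (α v) (dm a u)) := by
      rw [hd_bider (α a) (α b) (bracket u v), hS' b u v, hS' a u v]
    have e2 : dm (bracket (α a) (α b)) (α (bracket u v))
        = bracket (α (α u)) (bracket (α a) (dm b v) - bracket (α b) (dm a v))
          - bracket (α (α v)) (bracket (α a) (dm b u) - bracket (α b) (dm a u)) := by
      rw [← hmult a b, hmult u v, hS' (bracket a b) (α u) (α v),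
        hd_bider a b v, hd_bider a b u]
    have e := e1.symm.trans e2
    simp only [map_sub] at e
    rw [hJ' a u (dm b v), hJ' a v (dm b u), hJ' b u (dm a v), hJ' b v (dm a u)] at e
    have e' := sub_eq_zero_of_eq e.symm
    apply α.injective
    simp only [map_add, hmult]
    rw [← sub_eq_zero, ← e']
    abel
  -- the Brešar-type identity (V)
  have hV : ∀ a u b v : L,
      bracket (dm a u) (bracket b v) = bracket (bracket a u) (dm b v) := by
    have hR1 : ∀ a u b v : L,
        bracket (dm a u) (bracket b v) + bracket (dm b v) (bracket a u)
          = -(bracket (dm u a) (bracket b v) + bracket (dm b v) (bracket u a)) := by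
      intro a u b v
      rw [hd_skew u a, hskew u a, map_neg, map_neg, LinearMap.neg_apply]
      abel
    have hR4 : ∀ a u b v : L,
        bracket (dm a u) (bracket b v) + bracket (dm b v) (bracket a u)
          = bracket (dm b v) (bracket a u) + bracket (dm a u) (bracket b v) := by
      intro a u b v; abel
    intro a u b v
    have hGneg : bracket (dm a u) (bracket b v) + bracket (dm b v) (bracket a u)
        = -(bracket (dm a u) (bracket b v) + bracket (dm b v) (bracket a u)) := by
      calc bracket (dm a u) (bracket b v) + bracket (dm b v) (bracket a u)
          = -(bracket (dm u a) (bracket b v) + bracket (dm b v) (bracket u a)) :=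
            hR1 a u b v
        _ = -(bracket (dm b v) (bracket u a) + bracket (dm u a) (bracket b v)) := by
            rw [hR4 u a b v]
        _ = -(bracket (dm b a) (bracket u v) + bracket (dm u v) (bracket b a)) := by
            rw [hII b v u a]
        _ = -(-(bracket (dm a b) (bracket u v) + bracket (dm u v) (bracket a b))) := by
            rw [hR1 b a u v]
        _ = bracket (dm a b) (bracket u v) + bracket (dm u v) (bracket a b) := by
            rw [neg_neg]
        _ = bracket (dm u v) (bracket a b) + bracket (dm a b) (bracket u v) := by
            rw [hR4 a b u v]
        _ = bracket (dm u b) (bracket a v) + bracket (dm a v) (bracket u b) := by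
            rw [hII u v a b]
        _ = -(bracket (dm b u) (bracket a v) + bracket (dm a v) (bracket b u)) := by
            rw [hR1 u b a v]
        _ = -(bracket (dm a v) (bracket b u) + bracket (dm b u) (bracket a v)) := by
            rw [hR4 b u a v]
        _ = -(bracket (dm a u) (bracket b v) + bracket (dm b v) (bracket a u)) := by
            rw [hII a v b u]
    have hG0 := half _ hGneg
    have h := eq_neg_of_add_eq_zero_left hG0
    rw [h, hskew (bracket a u) (dm b v)]
  -- span of brackets is everything
  set gens : Set L := Set.range (fun p : L × L => bracket p.1 p.2) with hgens
  have hspan : Submodule.span F gens = ⊤ := by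
    have hc2 : ∀ x ∈ Submodule.span F gens, α x ∈ Submodule.span F gens := by
      intro x hx
      refine Submodule.span_induction (p := fun x _ => α x ∈ Submodule.span F gens)
        ?_ ?_ ?_ ?_ hx
      · rintro _ ⟨⟨u, v⟩, rfl⟩
        rw [hmult]
        exact Submodule.subset_span ⟨(α u, α v), rfl⟩
      · simp
      · intro p q _ _ hp hq; rw [map_add]; exact Submodule.add_mem _ hp hq
      · intro c p _ hp; rw [map_smul]; exact Submodule.smul_mem _ c hp
    rcases hsimple (Submodule.span F gens)
        (fun x _ y => Submodule.subset_span ⟨(x, y), rfl⟩) hc2 with h | h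
    · exfalso
      have : bracket x₀ y₀ ∈ Submodule.span F gens :=
        Submodule.subset_span ⟨(x₀, y₀), rfl⟩
      rw [h, Submodule.mem_bot] at this
      exact hxy₀ this
    · exact h
  -- the "center is zero" principle
  have hker0 : ∀ w : L, (∀ b v : L, bracket w (bracket b v) = 0) → w = 0 := by
    intro w hw
    have hbw : bracket w = 0 := by
      apply LinearMap.ext_on hspan
      rintro _ ⟨⟨b, v⟩, rfl⟩
      simpa using hw b v
    have hc1 : ∀ x ∈ LinearMap.ker bracket, ∀ y : L, bracket x y ∈ LinearMap.ker bracket := by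
      intro x hx y
      rw [LinearMap.mem_ker] at hx
      have : bracket x y = 0 := by rw [hx]; rfl
      rw [this]
      exact Submodule.zero_mem _
    have hc2 : ∀ x ∈ LinearMap.ker bracket, α x ∈ LinearMap.ker bracket := by
      intro x hx
      rw [LinearMap.mem_ker] at hx ⊢
      ext y
      have : bracket (α x) y = α (bracket x (α.symm y)) := by
        rw [hmult, α.apply_symm_apply]
      rw [LinearMap.zero_apply, this, hx, LinearMap.zero_apply, map_zero]
    rcases hsimple (LinearMap.ker bracket) hc1 hc2 with h | h
    · have : w ∈ LinearMap.ker bracket := LinearMap.mem_ker.mpr hbw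
      rw [h, Submodule.mem_bot] at this
      exact this
    · exfalso
      have : x₀ ∈ LinearMap.ker bracket := by rw [h]; trivial
      rw [LinearMap.mem_ker] at this
      exact hxy₀ (by rw [this]; rfl)
  -- construct γ with γ ∘ bracket = dm
  obtain ⟨γ, hγδ⟩ : ∃ γ : L →ₗ[F] L, ∀ x y : L, γ (bracket x y) = dm x y := by
    set β := TensorProduct.lift bracket with hβdef
    have hβ : ∀ x y : L, β (x ⊗ₜ[F] y) = bracket x y := fun x y =>
      TensorProduct.lift.tmul x y
    have hβsurj : LinearMap.range β = ⊤ := by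
      rw [← top_le_iff, ← hspan]
      rw [Submodule.span_le]
      rintro _ ⟨⟨x, y⟩, rfl⟩
      exact ⟨x ⊗ₜ[F] y, hβ x y⟩
    obtain ⟨s, hs⟩ := LinearMap.exists_rightInverse_of_surjective β hβsurj
    set dT := TensorProduct.lift dm with hdTdef
    have hdT : ∀ x y : L, dT (x ⊗ₜ[F] y) = dm x y := fun x y =>
      TensorProduct.lift.tmul x y
    have key : ∀ t : L ⊗[F] L, ∀ b v : L,
        bracket (dT t) (bracket b v) = bracket (β t) (dm b v) := by
      intro t
      induction t using TensorProduct.induction_on with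
        | zero => intro b v; simp
        | tmul x y => intro b v; rw [hβ, hdT]; exact hV x y b v
        | add p q hp hq =>
            intro b v
            simp only [map_add, LinearMap.add_apply, hp, hq]
    have hdT0 : ∀ t : L ⊗[F] L, β t = 0 → dT t = 0 := by
      intro t ht
      apply hker0
      intro b v
      rw [key t b v, ht, map_zero, LinearMap.zero_apply]
    refine ⟨dT ∘ₗ s, fun x y => ?_⟩
    have h1 : β (s (bracket x y) - x ⊗ₜ[F] y) = 0 := by
      rw [map_sub, hβ]
      have := LinearMap.congr_fun hs (bracket x y)
      rw [LinearMap.comp_apply, LinearMap.id_apply] at this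
      rw [this, sub_self]
    have h2 := hdT0 _ h1
    rw [map_sub, hdT, sub_eq_zero] at h2
    rw [LinearMap.comp_apply, h2]
  -- γ commutes with α
  have hγα : ∀ m : L, γ (α m) = α (γ m) := by
    have heq : (γ ∘ₗ (α : L →ₗ[F] L)) = ((α : L →ₗ[F] L) ∘ₗ γ) := by
      apply LinearMap.ext_on hspan
      rintro _ ⟨⟨x, y⟩, rfl⟩
      simp only [LinearMap.comp_apply, LinearEquiv.coe_coe]
      rw [hmult, hγδ, hγδ, hd_alpha]
    intro m
    have := LinearMap.congr_fun heq m
    simpa using this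
  -- γ is a centroid element
  have hγbr : ∀ w m : L, γ (bracket w m) = bracket w (γ m) := by
    have hjac2 : ∀ x y z : L,
        bracket (bracket x y) (α z)
          = bracket (α x) (bracket y z) - bracket (α y) (bracket x z) := by
      intro x y z
      have h := hjac x y z
      rw [hskew z x, map_neg] at h
      rw [hskew (bracket x y) (α z), ← sub_eq_zero, ← neg_eq_zero, ← h]
      abel
    have hbEq : ∀ x y z : L,
        γ (bracket (α x) (bracket y z)) - bracket (α x) (γ (bracket y z))
          = γ (bracket (α y) (bracket x z)) - bracket (α y) (γ (bracket x z)) := by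
      intro x y z
      have h1 : γ (bracket (bracket x y) (α z))
          = bracket (α x) (γ (bracket y z)) - bracket (α y) (γ (bracket x z)) := by
        rw [hγδ, hd_bider x y z, hγδ, hγδ]
      have h2 : γ (bracket (bracket x y) (α z))
          = γ (bracket (α x) (bracket y z)) - γ (bracket (α y) (bracket x z)) := by
        rw [hjac2 x y z, map_sub]
      have h := h2.symm.trans h1
      rw [← sub_eq_zero] at h ⊢
      rw [← h]
      abel
    have haEq : ∀ x y z : L,
        γ (bracket (α x) (bracket y z)) - bracket (α x) (γ (bracket y z))
          = -(γ (bracket (α x) (bracket z y)) - bracket (α x) (γ (bracket z y))) := by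
      intro x y z
      rw [hskew y z, map_neg, map_neg, map_neg, map_neg]
      abel
    have hVI : ∀ x y z : L,
        γ (bracket (α x) (bracket y z)) = bracket (α x) (γ (bracket y z)) := by
      intro x y z
      have hchain : γ (bracket (α x) (bracket y z)) - bracket (α x) (γ (bracket y z))
          = -(γ (bracket (α x) (bracket y z)) - bracket (α x) (γ (bracket y z))) := by
        calc γ (bracket (α x) (bracket y z)) - bracket (α x) (γ (bracket y z))
            = γ (bracket (α y) (bracket x z)) - bracket (α y) (γ (bracket x z)) :=
              hbEq x y z
          _ = -(γ (bracket (α y) (bracket z x)) - bracket (α y) (γ (bracket z x))) := by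
              rw [haEq y x z]
          _ = -(γ (bracket (α z) (bracket y x)) - bracket (α z) (γ (bracket y x))) := by
              rw [hbEq y z x]
          _ = -(-(γ (bracket (α z) (bracket x y)) - bracket (α z) (γ (bracket x y)))) := by
              rw [haEq z y x]
          _ = γ (bracket (α z) (bracket x y)) - bracket (α z) (γ (bracket x y)) := by
              rw [neg_neg]
          _ = γ (bracket (α x) (bracket z y)) - bracket (α x) (γ (bracket z y)) :=
              hbEq z x y
          _ = -(γ (bracket (α x) (bracket y z)) - bracket (α x) (γ (bracket y z))) :=
              haEq x z y
      have := half _ hchain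
      exact sub_eq_zero.mp this
    intro w m
    obtain ⟨x, rfl⟩ : ∃ x, α x = w := ⟨α.symm w, α.apply_symm_apply w⟩
    have hm : m ∈ Submodule.span F gens := by rw [hspan]; trivial
    refine Submodule.span_induction
      (p := fun m _ => γ (bracket (α x) m) = bracket (α x) (γ m)) ?_ ?_ ?_ ?_ hm
    · rintro _ ⟨⟨y, z⟩, rfl⟩
      exact hVI x y z
    · simp
    · intro p q _ _ hp hq
      simp only [map_add, hp, hq]
    · intro c p _ hp
      simp only [map_smul, hp]
  -- Schur's lemma step: γ is a scalar
  obtain ⟨μ, hμ⟩ := Module.End.exists_eigenvalue (γ : Module.End F L)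
  have hall : ∀ m : L, γ m = μ • m := by
    have hc1 : ∀ m ∈ Module.End.eigenspace γ μ, ∀ y : L,
        bracket m y ∈ Module.End.eigenspace γ μ := by
      intro m hm y
      rw [Module.End.mem_eigenspace_iff] at hm ⊢
      rw [hskew m y, map_neg, hγbr y m, hm, map_smul, smul_neg]
    have hc2 : ∀ m ∈ Module.End.eigenspace γ μ, α m ∈ Module.End.eigenspace γ μ := by
      intro m hm
      rw [Module.End.mem_eigenspace_iff] at hm ⊢
      rw [hγα m, hm, map_smul]
    rcases hsimple (Module.End.eigenspace γ μ) hc1 hc2 with h | h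
    · exact absurd h hμ
    · intro m
      exact Module.End.mem_eigenspace_iff.mp (h ▸ Submodule.mem_top)
  refine ⟨μ, fun x y => ?_⟩
  have h1 : dm x y = μ • bracket x y := by rw [← hγδ x y, hall]
  have h2 : (α ^ k) (dm x y) = δ x y := by rw [hdm x y, hcan1 k]
  rw [← h2, h1, map_smul]
end

section
/- Let (L, α) be a multiplicative Hom-Lie algebra over F with α surjective, let k be a natural number, and let δ : L × L → L be a skew-symmetric biderivation for the α^k-adjoint module (L, ad_k, α). Then δ(z, y) ∈ Z(L) for every z ∈ Z(L) and every y ∈ L, i.e. δ maps Z(L) × L into the center Z(L). -/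
/-- if `α` is surjective, a skew-symmetric biderivation for the
`α^k`-adjoint module maps `Z(L) × L` into the center `Z(L)`. -/
theorem homLie_adjoint_biderivation_center_invariant
    {F L : Type*} [Field F] [AddCommGroup L] [Module F L]
    (hchar : (2 : F) ≠ 0)
    (bracket : L →ₗ[F] L →ₗ[F] L) (α : L →ₗ[F] L)
    (hskew : ∀ x y : L, bracket x y = - bracket y x)
    (hjac : ∀ x y z : L,
      bracket (α x) (bracket y z) + bracket (α y) (bracket z x)
        + bracket (α z) (bracket x y) = 0)
    (hmult : ∀ x y : L, α (bracket x y) = bracket (α x) (α y))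
    (hαsurj : Function.Surjective α)
    (k : ℕ)
    (δ : L →ₗ[F] L →ₗ[F] L)
    (hδskew : ∀ x y : L, δ x y = - δ y x)
    (hδα : ∀ x y : L, α (δ x y) = δ (α x) (α y))
    (hδbider : ∀ x y z : L,
      δ (bracket x y) (α z)
        = bracket ((α ^ (k + 1)) x) (δ y z) - bracket ((α ^ (k + 1)) y) (δ x z)) :
    ∀ z : L, (∀ x : L, bracket z x = 0) →
      ∀ y w : L, bracket (δ z y) w = 0 := by
  intro z hz y w
  -- surjectivity of α^n
  have hpow : ∀ n : ℕ, Function.Surjective ⇑(α ^ n) := by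
    intro n
    induction n with
    | zero => exact fun x => ⟨x, by simp⟩
    | succ n ih =>
      intro x
      obtain ⟨a, ha⟩ := hαsurj x
      obtain ⟨b, hb⟩ := ih a
      exact ⟨b, by rw [pow_succ']; show α ((α ^ n) b) = x; rw [hb, ha]⟩
  -- α^n z is central
  have hcent : ∀ n : ℕ, ∀ x : L, bracket ((α ^ n) z) x = 0 := by
    intro n
    induction n with
    | zero => simpa using hz
    | succ n ih =>
      intro x
      obtain ⟨x', hx'⟩ := hαsurj x
      rw [pow_succ']
      have : (α * α ^ n) z = α ((α ^ n) z) := rfl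
      rw [this, ← hx', ← hmult, ih, map_zero]
  obtain ⟨u, hu⟩ := hpow (k + 1) w
  have h := hδbider z u y
  rw [hz u, map_zero, LinearMap.zero_apply, hcent (k + 1) (δ u y), hu] at h
  rw [zero_sub] at h
  have hwz : bracket w (δ z y) = 0 := neg_eq_zero.mp h.symm
  rw [hskew]
  rw [hwz, neg_zero]
end

section
/- Let (L, α) be a centerless multiplicative Hom-Lie algebra over F (Z(L) = {0}) with α bijective, let k be a natural number, and let δ : L × L → L be a skew-symmetric biderivation for the α^k-adjoint module (L, ad_k, α) such that δ(x, y) = 0 whenever both x and y lie in L'. Then δ is special: δ(u, v) ∈ Z_L(L') for all u, v ∈ L, i.e. [w, δ(u,v)] = 0 for all w ∈ L'. -/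
/-- on a centerless Hom-Lie algebra with `α` bijective, a
skew-symmetric biderivation for the `α^k`-adjoint module vanishing on
`L' × L'` is special: its range lies in `Z_L(L')`. -/
theorem homLie_adjoint_biderivation_vanishing_on_derived_is_special
    {F L : Type*} [Field F] [AddCommGroup L] [Module F L]
    (hchar : (2 : F) ≠ 0)
    (bracket : L →ₗ[F] L →ₗ[F] L) (α : L ≃ₗ[F] L)
    (hskew : ∀ x y : L, bracket x y = - bracket y x)
    (hjac : ∀ x y z : L,
      bracket (α x) (bracket y z) + bracket (α y) (bracket z x)
        + bracket (α z) (bracket x y) = 0)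
    (hmult : ∀ x y : L, α (bracket x y) = bracket (α x) (α y))
    (hcenterless : ∀ z : L, (∀ x : L, bracket z x = 0) → z = 0)
    (k : ℕ)
    (δ : L →ₗ[F] L →ₗ[F] L)
    (hδskew : ∀ x y : L, δ x y = - δ y x)
    (hδα : ∀ x y : L, α (δ x y) = δ (α x) (α y))
    (hδbider : ∀ x y z : L,
      δ (bracket x y) (α z)
        = bracket ((α ^ (k + 1)) x) (δ y z) - bracket ((α ^ (k + 1)) y) (δ x z))
    (hvanish : ∀ x ∈ Submodule.span F {w : L | ∃ a b : L, bracket a b = w},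
      ∀ y ∈ Submodule.span F {w : L | ∃ a b : L, bracket a b = w},
        δ x y = 0) :
    ∀ u v : L, ∀ w ∈ Submodule.span F {w : L | ∃ a b : L, bracket a b = w},
      bracket w (δ u v) = 0 := by
  set W := Submodule.span F {w : L | ∃ a b : L, bracket a b = w} with hWdef
  set P : L ≃ₗ[F] L := α ^ (k + 1) with hPdef
  -- brackets belong to W
  have hB : ∀ a b : L, bracket a b ∈ W :=
    fun a b => Submodule.subset_span ⟨a, b, rfl⟩
  -- dividing by 2
  have halfzero : ∀ X : L, X = -X → X = 0 := by
    intro X h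
    have h2 : (2 : F) • X = 0 := by
      rw [two_smul]
      nth_rewrite 1 [h]
      exact neg_add_cancel X
    calc X = ((2 : F)⁻¹ * 2) • X := by rw [inv_mul_cancel₀ hchar, one_smul]
      _ = (2 : F)⁻¹ • ((2 : F) • X) := by rw [mul_smul]
      _ = (2 : F)⁻¹ • (0 : L) := by rw [h2]
      _ = 0 := smul_zero _
  -- flipping the first argument of δ under a bracket
  have hflip : ∀ p q m : L, bracket (δ p q) m = - bracket (δ q p) m := by
    intro p q m
    rw [hδskew p q, map_neg, LinearMap.neg_apply]
  -- α-stability of W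
  have hWα : ∀ w ∈ W, α w ∈ W := by
    intro w hw
    rw [hWdef] at hw
    induction hw using Submodule.span_induction with
    | mem x hx =>
      obtain ⟨a, b, rfl⟩ := hx
      rw [hmult]
      exact hB (α a) (α b)
    | zero => rw [map_zero]; exact Submodule.zero_mem _
    | add x y hx hy ihx ihy => rw [map_add]; exact add_mem ihx ihy
    | smul c x hx ih => rw [map_smul]; exact Submodule.smul_mem _ _ ih
  have hWαs : ∀ w ∈ W, α.symm w ∈ W := by
    intro w hw
    rw [hWdef] at hw
    induction hw using Submodule.span_induction with
    | mem x hx =>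
      obtain ⟨a, b, rfl⟩ := hx
      have h : α.symm (bracket a b) = bracket (α.symm a) (α.symm b) := by
        apply α.injective
        rw [LinearEquiv.apply_symm_apply, hmult, LinearEquiv.apply_symm_apply,
          LinearEquiv.apply_symm_apply]
      rw [h]
      exact hB _ _
    | zero => rw [map_zero]; exact Submodule.zero_mem _
    | add x y hx hy ihx ihy => rw [map_add]; exact add_mem ihx ihy
    | smul c x hx ih => rw [map_smul]; exact Submodule.smul_mem _ _ ih
  -- surjectivity of powers of α onto W
  have hWsurjn : ∀ n : ℕ, ∀ w ∈ W, ∃ z ∈ W, (α ^ n) z = w := by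
    intro n
    induction n with
    | zero => intro w hw; exact ⟨w, hw, by simp⟩
    | succ n ih =>
      intro w hw
      obtain ⟨z, hz, hze⟩ := ih (α.symm w) (hWαs w hw)
      refine ⟨z, hz, ?_⟩
      rw [pow_succ']
      show α ((α ^ n) z) = w
      rw [hze, LinearEquiv.apply_symm_apply]
  have hWP : ∀ w ∈ W, ∃ z ∈ W, P z = w := by
    intro w hw
    obtain ⟨z, hz, hze⟩ := hWsurjn (k + 1) w hw
    exact ⟨z, hz, by rw [hPdef]; exact hze⟩
  -- commutation of P with α
  have hcomm : ∀ x : L, P (α x) = α (P x) := by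
    intro x
    have h1 : P * α = α * P := by rw [hPdef, ← pow_succ, ← pow_succ']
    calc P (α x) = (P * α) x := rfl
      _ = (α * P) x := by rw [h1]
      _ = α (P x) := rfl
  -- δ with α in first argument against a bracket
  have Lgen : ∀ a b c : L,
      δ (α c) (bracket a b) = bracket (P a) (δ c b) - bracket (P b) (δ c a) := by
    intro a b c
    rw [hδskew (α c) (bracket a b), hδbider a b c, hδskew b c, hδskew a c]
    simp only [map_neg]
    abel
  -- symmetry relation from vanishing on L' × L'
  have LC : ∀ x y : L, ∀ z ∈ W, bracket (P x) (δ y z) = bracket (P y) (δ x z) := by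
    intro x y z hz
    have h0 : δ (bracket x y) (α z) = 0 := hvanish _ (hB x y) _ (hWα z hz)
    have h := hδbider x y z
    rw [h0] at h
    exact sub_eq_zero.mp h.symm
  -- δ(x, W) is orthogonal to W
  have LF1 : ∀ w ∈ W, ∀ x : L, ∀ z ∈ W, bracket w (δ x z) = 0 := by
    intro w hw x z hz
    obtain ⟨y, hy, rfl⟩ := hWP w hw
    rw [LC y x z hz, hvanish y hy z hz, map_zero]
  -- Lemma S : [W, [P a, δ b c]] = 0
  have LS : ∀ w ∈ W, ∀ a b c : L, bracket w (bracket (P a) (δ b c)) = 0 := by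
    intro w hw a b c
    have hsym : ∀ a b c : L,
        bracket w (bracket (P a) (δ b c)) = bracket w (bracket (P b) (δ a c)) := by
      intro a b c
      have h0 : bracket w (δ (bracket a b) (α c)) = 0 := by
        rw [hδskew (bracket a b) (α c), map_neg,
          LF1 w hw (α c) (bracket a b) (hB a b), neg_zero]
      have h1 : bracket w (bracket (P a) (δ b c)) - bracket w (bracket (P b) (δ a c)) = 0 := by
        rw [← map_sub, ← hδbider a b c, h0]
      exact sub_eq_zero.mp h1
    have hanti : ∀ a b c : L,
        bracket w (bracket (P a) (δ b c)) = - bracket w (bracket (P a) (δ c b)) := by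
      intro a b c
      rw [hδskew b c]
      simp only [map_neg]
    apply halfzero
    calc bracket w (bracket (P a) (δ b c))
        = bracket w (bracket (P b) (δ a c)) := hsym a b c
      _ = - bracket w (bracket (P b) (δ c a)) := hanti b a c
      _ = - bracket w (bracket (P c) (δ b a)) := by rw [hsym b c a]
      _ = - - bracket w (bracket (P c) (δ a b)) := by rw [hanti c b a]
      _ = bracket w (bracket (P c) (δ a b)) := neg_neg _
      _ = bracket w (bracket (P a) (δ c b)) := hsym c a b
      _ = - bracket w (bracket (P a) (δ b c)) := hanti a c b
  have LS' : ∀ w ∈ W, ∀ x b c : L, bracket w (bracket x (δ b c)) = 0 := by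
    intro w hw x b c
    have h := LS w hw (P.symm x) b c
    rwa [LinearEquiv.apply_symm_apply] at h
  -- Jacobi conversion
  have JC : ∀ a b d : L,
      bracket (α (P a)) (bracket (P b) d)
        = bracket (α (P b)) (bracket (P a) d) - bracket (α d) (bracket (P a) (P b)) := by
    intro a b d
    have h := hjac (P a) (P b) d
    rw [hskew d (P a), map_neg] at h
    linear_combination (norm := module) h
  -- the Hom-Brešar style identity (★)
  have Lstar : ∀ X U y v : L,
      bracket (δ (α U) (α v)) (bracket (P X) (P y))
        - bracket (δ (α U) (α y)) (bracket (P X) (P v))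
        - bracket (δ (α X) (α v)) (bracket (P U) (P y))
        + bracket (δ (α X) (α y)) (bracket (P U) (P v)) = 0 := by
    intro X U y v
    have hW1 := hδbider (α X) (α U) (bracket y v)
    rw [Lgen y v U, Lgen y v X] at hW1
    simp only [map_sub] at hW1
    rw [hcomm X, hcomm U] at hW1
    have hconv : δ (bracket (α X) (α U)) (α (bracket y v))
        = δ (α (bracket X U)) (bracket (α y) (α v)) := by
      rw [hmult X U, hmult y v]
    have hW2 := hconv.trans (Lgen (α y) (α v) (bracket X U))
    rw [hδbider X U v, hδbider X U y] at hW2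
    simp only [map_sub] at hW2
    rw [hcomm y, hcomm v] at hW2
    have hJ1 := JC X y (δ U v)
    have hJ2 := JC X v (δ U y)
    have hJ3 := JC U y (δ X v)
    have hJ4 := JC U v (δ X y)
    rw [← hδα U v, ← hδα U y, ← hδα X v, ← hδα X y]
    linear_combination (norm := module) hJ1 - hJ2 - hJ3 + hJ4 + hW1 - hW2
  -- the exchange relation (D)
  have hD : ∀ U v X : L, ∀ Z ∈ W,
      bracket (δ (α U) (α v)) (bracket (P X) (P Z))
        = bracket (δ (α X) (α v)) (bracket (P U) (P Z)) := by
    intro U v X Z hZ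
    have h2 : bracket (δ (α U) (α Z)) (bracket (P X) (P v)) = 0 := by
      rw [hskew (δ (α U) (α Z)) (bracket (P X) (P v)),
        LF1 (bracket (P X) (P v)) (hB _ _) (α U) (α Z) (hWα Z hZ), neg_zero]
    have h4 : bracket (δ (α X) (α Z)) (bracket (P U) (P v)) = 0 := by
      rw [hskew (δ (α X) (α Z)) (bracket (P U) (P v)),
        LF1 (bracket (P U) (P v)) (hB _ _) (α X) (α Z) (hWα Z hZ), neg_zero]
    have h := Lstar X U Z v
    linear_combination (norm := module) h + h2 - h4
  -- fact 2 : δ values annihilate brackets with a W-entry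
  have fact2' : ∀ U v X : L, ∀ Z ∈ W,
      bracket (δ (α U) (α v)) (bracket (P X) (P Z)) = 0 := by
    intro U v X Z hZ
    apply halfzero
    calc bracket (δ (α U) (α v)) (bracket (P X) (P Z))
        = bracket (δ (α X) (α v)) (bracket (P U) (P Z)) := hD U v X Z hZ
      _ = - bracket (δ (α v) (α X)) (bracket (P U) (P Z)) := hflip _ _ _
      _ = - bracket (δ (α U) (α X)) (bracket (P v) (P Z)) := by rw [hD v X U Z hZ]
      _ = - - bracket (δ (α X) (α U)) (bracket (P v) (P Z)) := by
          rw [hflip (α U) (α X) (bracket (P v) (P Z))]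
      _ = bracket (δ (α X) (α U)) (bracket (P v) (P Z)) := neg_neg _
      _ = bracket (δ (α v) (α U)) (bracket (P X) (P Z)) := hD X U v Z hZ
      _ = - bracket (δ (α U) (α v)) (bracket (P X) (P Z)) := hflip _ _ _
  have fact2 : ∀ a b t : L, ∀ w ∈ W, bracket (δ a b) (bracket t w) = 0 := by
    intro a b t w hw
    obtain ⟨Z, hZ, rfl⟩ := hWP w hw
    have h := fact2' (α.symm a) (α.symm b) (P.symm t) Z hZ
    rwa [LinearEquiv.apply_symm_apply, LinearEquiv.apply_symm_apply,
      LinearEquiv.apply_symm_apply] at h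
  -- main proof
  intro u v w hw
  apply hcenterless
  intro s
  have key : bracket s (bracket w (δ u v)) = 0 := by
    have hj := hjac (α.symm s) w (δ u v)
    have t2 : bracket (α w) (bracket (δ u v) (α.symm s)) = 0 := by
      rw [hskew (δ u v) (α.symm s), map_neg, LS' (α w) (hWα w hw) (α.symm s) u v, neg_zero]
    have t3 : bracket (α (δ u v)) (bracket (α.symm s) w) = 0 := by
      rw [hδα u v]
      exact fact2 (α u) (α v) (α.symm s) w hw
    rw [t2, t3, add_zero, add_zero, LinearEquiv.apply_symm_apply] at hj
    exact hj
  rw [hskew (bracket w (δ u v)) s, key, neg_zero]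
end

section
/- Let (L, α) be a multiplicative Hom-Lie algebra over F and (V, ρ, β) an (L, α)-module with β invertible. If f : L → V is a commuting linear map (ρ(α(x))(f(x)) = 0 for all x ∈ L and β∘f = f∘α), then the bilinear map δ(x, y) := β⁻¹( ρ(α(x))(f(y)) ) is a skew-symmetric biderivation, i.e. δ(x,y) = −δ(y,x), β(δ(x,y)) = δ(α(x),α(y)), and δ(α(x),[y,z]) = ρ(α(y))(δ(x,z)) − ρ(α(z))(δ(x,y)) for all x, y, z ∈ L. -/
/-- a commuting linear map `f` with `β` invertible induces the
skew-symmetric biderivation `δ(x,y) = β⁻¹(α(x)·f(y))`. -/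
theorem homLie_commuting_map_gives_biderivation
    {F L V : Type*} [Field F] [AddCommGroup L] [Module F L]
    [AddCommGroup V] [Module F V]
    (hchar : (2 : F) ≠ 0)
    (bracket : L →ₗ[F] L →ₗ[F] L) (α : L →ₗ[F] L)
    (hskew : ∀ x y : L, bracket x y = - bracket y x)
    (hjac : ∀ x y z : L,
      bracket (α x) (bracket y z) + bracket (α y) (bracket z x)
        + bracket (α z) (bracket x y) = 0)
    (hmult : ∀ x y : L, α (bracket x y) = bracket (α x) (α y))
    (ρ : L →ₗ[F] V →ₗ[F] V) (β : V ≃ₗ[F] V)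
    (hrep1 : ∀ (x : L) (v : V), β (ρ x v) = ρ (α x) (β v))
    (hrep2 : ∀ (x y : L) (v : V),
      ρ (bracket x y) (β v) = ρ (α x) (ρ y v) - ρ (α y) (ρ x v))
    (f : L →ₗ[F] V)
    (hcom : ∀ x : L, ρ (α x) (f x) = 0)
    (hfα : ∀ x : L, β (f x) = f (α x))
    (δ : L → L → V)
    (hδ : ∀ x y : L, δ x y = β.symm (ρ (α x) (f y))) :
    (∀ x y : L, δ x y = - δ y x) ∧
    (∀ x y : L, β (δ x y) = δ (α x) (α y)) ∧
    (∀ x y z : L,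
      δ (α x) (bracket y z) = ρ (α y) (δ x z) - ρ (α z) (δ x y)) := by
  have gskew : ∀ x y : L, ρ (α x) (f y) = - ρ (α y) (f x) := by
    intro x y
    have h := hcom (x + y)
    simp only [map_add, LinearMap.add_apply, hcom x, hcom y, add_zero, zero_add] at h
    exact eq_neg_of_add_eq_zero_right h
  refine ⟨?_, ?_, ?_⟩
  · intro x y
    rw [hδ, hδ, gskew x y, map_neg]
  · intro x y
    rw [hδ, hδ, ← hfα, ← hrep1, LinearEquiv.symm_apply_apply, LinearEquiv.apply_symm_apply]
  · intro x y z
    have key : ρ (α (α x)) (f (bracket y z)) =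
        β (ρ (α y) (δ x z)) - β (ρ (α z) (δ x y)) := by
      rw [gskew (α x) (bracket y z), ← hfα, hmult, hrep2, gskew z x, gskew y x, hδ, hδ]
      simp only [map_neg, hrep1, LinearEquiv.apply_symm_apply]
      abel
    rw [hδ, key, map_sub, LinearEquiv.symm_apply_apply, LinearEquiv.symm_apply_apply]
end

section
/- Let (L, α) be a multiplicative Hom-Lie algebra over F with α surjective, and let (V, ρ, β) be an (L, α)-module with β invertible such that Z_V(L') = {0}. Then the commuting linear maps from L to V coincide with the centroid: a linear map f : L → V satisfies ρ(α(x))(f(x)) = 0 for all x ∈ L and β∘f = f∘α if and only if f([x,y]) = ρ(α(x))(f(y)) for all x, y ∈ L and β∘f = f∘α. -/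
set_option maxHeartbeats 4000000 in
/-- Theorem 4.3: if `α` is surjective, `β` is invertible and
`Z_V(L') = 0`, then commuting linear maps coincide with the centroid. -/
theorem homLie_commuting_eq_centroid
    {F L V : Type*} [Field F] [AddCommGroup L] [Module F L]
    [AddCommGroup V] [Module F V]
    (hchar : (2 : F) ≠ 0)
    (bracket : L →ₗ[F] L →ₗ[F] L) (α : L →ₗ[F] L)
    (hskew : ∀ x y : L, bracket x y = - bracket y x)
    (hjac : ∀ x y z : L,
      bracket (α x) (bracket y z) + bracket (α y) (bracket z x)
        + bracket (α z) (bracket x y) = 0)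
    (hmult : ∀ x y : L, α (bracket x y) = bracket (α x) (α y))
    (hαsurj : Function.Surjective α)
    (ρ : L →ₗ[F] V →ₗ[F] V) (β : V ≃ₗ[F] V)
    (hrep1 : ∀ (x : L) (v : V), β (ρ x v) = ρ (α x) (β v))
    (hrep2 : ∀ (x y : L) (v : V),
      ρ (bracket x y) (β v) = ρ (α x) (ρ y v) - ρ (α y) (ρ x v))
    (hZVL' : ∀ v : V,
      (∀ s ∈ Submodule.span F {w : L | ∃ a b : L, bracket a b = w}, ρ s v = 0)
        → v = 0) :
    ∀ f : L →ₗ[F] V,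
      ((∀ x : L, ρ (α x) (f x) = 0) ∧ (∀ x : L, β (f x) = f (α x)))
        ↔ ((∀ x y : L, f (bracket x y) = ρ (α x) (f y))
            ∧ (∀ x : L, β (f x) = f (α x))) := by
  intro f
  constructor
  · -- commuting ⇒ centroid
    rintro ⟨hcom, hβf⟩
    refine ⟨?_, hβf⟩
    -- polarization: skew-symmetry of (x,y) ↦ ρ(αx)(f y)
    have hBskew : ∀ a b : L, ρ (α a) (f b) = - ρ (α b) (f a) := by
      intro a b
      have h := hcom (a + b)
      simp only [map_add, LinearMap.add_apply] at h
      linear_combination (norm := module) h - hcom a - hcom b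
    set G : L → L → V := fun a b => f (bracket a b) - ρ (α a) (f b) with hGdef
    have hGskew : ∀ a b : L, G a b = - G b a := by
      intro a b
      have h2 : f (bracket a b) = - f (bracket b a) := by rw [hskew a b, map_neg]
      simp only [hGdef]
      linear_combination (norm := module) h2 - hBskew a b
    have hβG : ∀ a b : L, β (G a b) = G (α a) (α b) := by
      intro a b
      simp only [hGdef, map_sub, hrep1, hβf, hmult]
    -- the key auxiliary relation (*)
    have hstar : ∀ a c b : L,
        ρ (α (α c)) (ρ (α a) (f b))
          = ρ (α (α b)) (f (bracket a c)) - ρ (α (α a)) (ρ (α b) (f c)) := by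
      intro a c b
      have e1 := hrep2 (α a) (α c) (f b)
      rw [hβf b, ← hmult a c, hBskew (bracket a c) (α b)] at e1
      have e2 := congrArg (ρ (α (α a))) (hBskew c b)
      rw [map_neg] at e2
      linear_combination (norm := module) e1 + e2
    -- H z a b := ρ(α²z) (G a b) is alternating
    have h13 : ∀ c a b : L, ρ (α (α c)) (G a b) = - ρ (α (α b)) (G a c) := by
      intro c a b
      have s : ρ (α (α a)) (ρ (α b) (f c)) = - ρ (α (α a)) (ρ (α c) (f b)) := by
        have := congrArg (ρ (α (α a))) (hBskew b c)
        rwa [map_neg] at this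
      simp only [hGdef, map_sub]
      linear_combination (norm := module) s - hstar a c b - hstar a b c
    have h23 : ∀ c a b : L, ρ (α (α c)) (G a b) = - ρ (α (α c)) (G b a) := by
      intro c a b
      have := congrArg (ρ (α (α c))) (hGskew a b)
      rwa [map_neg] at this
    have hperm : ∀ c a b : L, ρ (α (α c)) (G a b) = ρ (α (α b)) (G c a) := by
      intro c a b
      rw [h13 c a b, h23 b a c, neg_neg]
    -- Hom-version of the cyclic sum identity
    have hSig : ∀ z x y : L,
        G (α z) (bracket x y) + G (α x) (bracket y z) + G (α y) (bracket z x)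
          = -((2:F) • ρ (α (α z)) (G x y)) := by
      intro z x y
      have j := congrArg f (hjac z x y)
      simp only [map_add, map_zero] at j
      have e1 := hrep2 (α x) (α y) (f z)
      rw [hβf z, ← hmult x y, hBskew (bracket x y) (α z)] at e1
      have e2 := hrep2 (α y) (α z) (f x)
      rw [hβf x, ← hmult y z, hBskew (bracket y z) (α x)] at e2
      have e3 := hrep2 (α z) (α x) (f y)
      rw [hβf y, ← hmult z x, hBskew (bracket z x) (α y)] at e3
      have s1 : ρ (α (α z)) (ρ (α y) (f x)) = - ρ (α (α z)) (ρ (α x) (f y)) := by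
        have := congrArg (ρ (α (α z))) (hBskew y x); rwa [map_neg] at this
      have s2 : ρ (α (α x)) (ρ (α z) (f y)) = - ρ (α (α x)) (ρ (α y) (f z)) := by
        have := congrArg (ρ (α (α x))) (hBskew z y); rwa [map_neg] at this
      have s3 : ρ (α (α y)) (ρ (α x) (f z)) = - ρ (α (α y)) (ρ (α z) (f x)) := by
        have := congrArg (ρ (α (α y))) (hBskew x z); rwa [map_neg] at this
      simp only [hGdef, map_sub]
      linear_combination (norm := module) j - e1 + e2 + e3 - s1 - s2 + s3
    -- expanding H with a bracket in the first slot
    have hC : ∀ a b u x : L,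
        ρ (α (α (bracket a b))) (G (α u) (α x))
          = ρ (α (α (α a))) (ρ (α (α b)) (G u x))
            - ρ (α (α (α b))) (ρ (α (α a)) (G u x)) := by
      intro a b u x
      have e := hrep2 (α (α a)) (α (α b)) (G u x)
      rw [hβG u x] at e
      rw [show bracket (α (α a)) (α (α b)) = α (α (bracket a b)) from by
        rw [hmult, hmult]] at e
      exact e
    have hC2 : ∀ a b u x : L,
        ρ (α (α (bracket a b))) (G (α u) (α x))
          = ρ (α (α (α a))) (ρ (α (α u)) (G x b))
            - ρ (α (α (α b))) (ρ (α (α u)) (G x a)) := by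
      intro a b u x
      have e := hC a b u x
      rw [hperm b u x, hperm x b u, hperm a u x, hperm x a u] at e
      exact e
    -- the π-identity
    have hPi : ∀ w z x y : L,
        ρ (α (α (α w))) (ρ (α (α z)) (G x y))
          = ρ (α (α (α z))) (ρ (α (α w)) (G x y))
            - ρ (α (α (α x))) (ρ (α (α w)) (G z y))
            + ρ (α (α (α y))) (ρ (α (α w)) (G z x)) := by
      intro w z x y
      have e0 := congrArg (ρ (α (α (α w)))) (hSig z x y)
      simp only [map_add, map_neg, map_smul] at e0
      rw [hperm (α w) (α z) (bracket x y), hC2 x y w z,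
          hperm (α w) (α x) (bracket y z), hC2 y z w x,
          hperm (α w) (α y) (bracket z x), hC2 z x w y] at e0
      have A1 : ρ (α (α (α y))) (ρ (α (α w)) (G x z))
          = - ρ (α (α (α y))) (ρ (α (α w)) (G z x)) := by
        have := congrArg (ρ (α (α (α y)))) (h23 w x z); rwa [map_neg] at this
      have A2 : ρ (α (α (α z))) (ρ (α (α w)) (G y x))
          = - ρ (α (α (α z))) (ρ (α (α w)) (G x y)) := by
        have := congrArg (ρ (α (α (α z)))) (h23 w y x); rwa [map_neg] at this
      have A3 : ρ (α (α (α x))) (ρ (α (α w)) (G y z))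
          = - ρ (α (α (α x))) (ρ (α (α w)) (G z y)) := by
        have := congrArg (ρ (α (α (α x)))) (h23 w y z); rwa [map_neg] at this
      have e4 : (2:F) • (ρ (α (α (α w))) (ρ (α (α z)) (G x y)))
          = (2:F) • (ρ (α (α (α z))) (ρ (α (α w)) (G x y))
            - ρ (α (α (α x))) (ρ (α (α w)) (G z y))
            + ρ (α (α (α y))) (ρ (α (α w)) (G z x))) := by
        linear_combination (norm := module) e0 - A1 - A2 + A3
      exact smul_right_injective V hchar e4
    -- lifted π-identity
    have hb : ∀ u v s t w : L,
        ρ (α (α (α (α u)))) (ρ (α (α (α v))) (ρ (α (α s)) (G t w)))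
          = ρ (α (α (α (α u)))) (ρ (α (α (α s))) (ρ (α (α v)) (G t w)))
            - ρ (α (α (α (α u)))) (ρ (α (α (α t))) (ρ (α (α v)) (G s w)))
            + ρ (α (α (α (α u)))) (ρ (α (α (α w))) (ρ (α (α v)) (G s t))) := by
      intro u v s t w
      have := congrArg (ρ (α (α (α (α u))))) (hPi v s t w)
      simpa only [map_sub, map_add] using this
    -- bracket-operator expansion
    have hA : ∀ u v s t w : L,
        ρ (bracket (α (α (α u))) (α (α (α v)))) (ρ (α (α (α s))) (G (α t) (α w)))
          = ρ (α (α (α (α u)))) (ρ (α (α (α v))) (ρ (α (α s)) (G t w)))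
            - ρ (α (α (α (α v)))) (ρ (α (α (α u))) (ρ (α (α s)) (G t w))) := by
      intro u v s t w
      have e := hrep2 (α (α (α u))) (α (α (α v))) (ρ (α (α s)) (G t w))
      rw [hrep1, hβG] at e
      exact e
    -- π-identity at a bracket
    have he : ∀ b c z x y : L,
        ρ (bracket (α (α (α b))) (α (α (α c)))) (ρ (α (α (α z))) (G (α x) (α y)))
          = (ρ (α (α (α (α z)))) (ρ (α (α (α b))) (ρ (α (α c)) (G x y)))
              - ρ (α (α (α (α z)))) (ρ (α (α (α c))) (ρ (α (α b)) (G x y))))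
            - (ρ (α (α (α (α x)))) (ρ (α (α (α b))) (ρ (α (α c)) (G z y)))
              - ρ (α (α (α (α x)))) (ρ (α (α (α c))) (ρ (α (α b)) (G z y))))
            + (ρ (α (α (α (α y)))) (ρ (α (α (α b))) (ρ (α (α c)) (G z x)))
              - ρ (α (α (α (α y)))) (ρ (α (α (α c))) (ρ (α (α b)) (G z x)))) := by
      intro b c z x y
      have e := hPi (bracket b c) (α z) (α x) (α y)
      rw [show α (α (α (bracket b c)))
            = bracket (α (α (α b))) (α (α (α c))) from by
        rw [hmult, hmult, hmult]] at e
      rw [hC b c x y, hC b c z y, hC b c z x] at e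
      simp only [map_sub] at e
      linear_combination (norm := module) e
    -- the main vanishing identity
    have hT0 : ∀ p q z x y : L,
        ρ (bracket (α (α (α p))) (α (α (α q)))) (ρ (α (α (α z))) (G (α x) (α y)))
          = 0 := by
      intro p q z x y
      have e2T : (2:F) • (ρ (bracket (α (α (α p))) (α (α (α q))))
          (ρ (α (α (α z))) (G (α x) (α y)))) = (2:F) • (0:V) := by
        rw [smul_zero]
        linear_combination (norm := module)
          (- hb p q z x y) - hb p q z y x + hb p q x z y + hb p q x y z
          - hb p q y z x - hb p z x y q + hb q p z x y + hb q p z y x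
          - hb q p x z y - hb q p x y z + hb q p y z x + hb q z x y p
          + hb z p y x q - hb z q y x p - hb x p y z q + hb x q y z p
          + hb y p x z q - hb y q x z p
          + he p q z x y + hA p q z x y + he p q z y x - hA p q z y x
          - he p q x y z + hA p q x y z + he p z x y q - hA p z x y q
          - he p x z y q + hA p x z y q + he p y z x q - hA p y z x q
          - he q z x y p + hA q z x y p + he q x z y p - hA q x z y p
          - he q y z x p + hA q y z x p
      exact smul_right_injective V hchar e2T
    -- stage 1: H vanishes identically
    have hHzero : ∀ Z X Y : L, ρ (α (α Z)) (G X Y) = 0 := by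
      intro Z X Y
      obtain ⟨z, rfl⟩ := hαsurj Z
      obtain ⟨x, rfl⟩ := hαsurj X
      obtain ⟨y, rfl⟩ := hαsurj Y
      apply hZVL'
      intro s hs
      have key : {w : L | ∃ a b : L, bracket a b = w}
          ⊆ ↑(LinearMap.ker ((LinearMap.flip ρ)
              (ρ (α (α (α z))) (G (α x) (α y))))) := by
        rintro w ⟨c, d, rfl⟩
        obtain ⟨p, hp⟩ := hαsurj c
        obtain ⟨p, hp2⟩ := hαsurj p
        obtain ⟨p, hp3⟩ := hαsurj p
        obtain ⟨q, hq⟩ := hαsurj d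
        obtain ⟨q, hq2⟩ := hαsurj q
        obtain ⟨q, hq3⟩ := hαsurj q
        simp only [SetLike.mem_coe, LinearMap.mem_ker, LinearMap.flip_apply]
        rw [← hp, ← hp2, ← hp3, ← hq, ← hq2, ← hq3]
        exact hT0 p q z x y
      have := Submodule.span_le.mpr key hs
      simpa using this
    -- stage 2: G vanishes identically
    have hGzero : ∀ X Y : L, G X Y = 0 := by
      intro X Y
      apply hZVL'
      intro s hs
      have key : {w : L | ∃ a b : L, bracket a b = w}
          ⊆ ↑(LinearMap.ker ((LinearMap.flip ρ) (G X Y))) := by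
        rintro w ⟨c, d, rfl⟩
        obtain ⟨p, hp⟩ := hαsurj c
        obtain ⟨p, hp2⟩ := hαsurj p
        obtain ⟨q, hq⟩ := hαsurj d
        obtain ⟨q, hq2⟩ := hαsurj q
        simp only [SetLike.mem_coe, LinearMap.mem_ker, LinearMap.flip_apply]
        rw [← hp, ← hp2, ← hq, ← hq2]
        rw [show bracket (α (α p)) (α (α q)) = α (α (bracket p q)) from by
          rw [hmult, hmult]]
        exact hHzero (bracket p q) X Y
      have := Submodule.span_le.mpr key hs
      simpa using this
    intro x y
    have h := hGzero x y
    simp only [hGdef] at h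
    linear_combination (norm := module) h
  · -- centroid ⇒ commuting
    rintro ⟨hcent, hβf⟩
    refine ⟨?_, hβf⟩
    intro x
    have hx : bracket x x = 0 := by
      have h2 : (2:F) • (bracket x x) = 0 := by
        rw [two_smul]
        linear_combination (norm := module) hskew x x
      rcases smul_eq_zero.mp h2 with h | h
      · exact absurd h hchar
      · exact h
    have h := hcent x x
    rw [hx, map_zero] at h
    exact h.symm
end
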